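/- arXiv:2605.17330 — 7 statements merged into one kernel-verified Lean document; each statement's English description precedes it below -/
import Mathlib

section
/- Let G be a graph on n vertices containing a Hamilton cycle, such that G is outerplanar (has a planar embedding with all vertices on the outer face) and contains no subgraph isomorphic to the double star S_{2,2}. If n ≥ 6, then the maximum degree of G is at most 3. -/
open SimpleGraph Finset

/-- `G` contains a copy of the double star `S_{p,q}`: adjacent centers `x, y`,
with `p` leaves attached to `x` and `q` leaves attached to `y`, all distinct. -/
def ContainsDoubleStar {V : Type*} (G : SimpleGraph V) (p q : ℕ) : Prop :=
  ∃ (x y : V) (X Y : Finset V), G.Adj x y ∧ X.card = p ∧ Y.card = q ∧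
    Disjoint X Y ∧ y ∉ X ∧ x ∉ Y ∧ (∀ v ∈ X, G.Adj x v) ∧ (∀ v ∈ Y, G.Adj y v)

/-- A graph is outerplanar iff it admits a one-page book embedding: a linear
ordering of the vertices such that no two edges cross. -/
def IsOuterplanar {V : Type*} (G : SimpleGraph V) : Prop :=
  ∃ σ : V → Fin (Nat.card V), Function.Bijective σ ∧
    ∀ a b c d : V, G.Adj a b → G.Adj c d → ¬ (σ a < σ c ∧ σ c < σ b ∧ σ b < σ d)

/-!
Let `C` be the Hamilton cycle, viewed as a connected spanning subgraph in which every vertex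
has exactly two neighbours. A vertex `v` of degree at least `4` has two chords `vw`, `vw'`.
Since there is no `S_{2,2}` on the edge `vw`, both cycle-neighbours of `w` lie among the three
other neighbours `w'` and `N_C(v)` of `v`, and symmetrically for `w'`. Counting cycle edges
between `{v, w, w'}` and the two vertices of `N_C(v)` shows that these five vertices are closed
under cycle adjacency, so the graph has at most five vertices.
-/

namespace SimpleGraph

variable {V : Type*}

theorem Preconnected.eq_univ_of_adj_mem [Fintype V] {C : SimpleGraph V}
    (hC : C.Preconnected) {S : Finset V} (hS : S.Nonempty)
    (hadj : ∀ x ∈ S, ∀ y, C.Adj x y → y ∈ S) : S = univ := by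
  obtain ⟨x, hx⟩ := hS
  refine eq_univ_of_forall fun y => ?_
  obtain ⟨p⟩ := hC x y
  induction p with
  | nil => exact hx
  | cons h _ ih => exact ih (hadj _ hx _ h)

theorem Walk.IsHamiltonianCycle.card_neighborFinset_spanningCoe [DecidableEq V]
    {G : SimpleGraph V} {u : V} {c : G.Walk u u} (hc : c.IsHamiltonianCycle) (x : V)
    [Fintype (c.toSubgraph.spanningCoe.neighborSet x)] :
    #(c.toSubgraph.spanningCoe.neighborFinset x) = 2 := by
  rw [← Set.ncard_coe_finset, coe_neighborFinset]
  exact hc.isCycle.ncard_neighborSet_toSubgraph_eq_two (hc.mem_support x)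

theorem Walk.IsHamiltonianCycle.preconnected_spanningCoe [DecidableEq V] {G : SimpleGraph V}
    {u : V} {c : G.Walk u u} (hc : c.IsHamiltonianCycle) : c.toSubgraph.spanningCoe.Preconnected :=
  fun x y => (c.toSubgraph_connected.preconnected.coe
    ⟨x, c.mem_verts_toSubgraph.mpr (hc.mem_support x)⟩
    ⟨y, c.mem_verts_toSubgraph.mpr (hc.mem_support y)⟩).map
    c.toSubgraph.coeEmbeddingSpanningCoe.toHom

/-- Otherwise two vertices of `X \ Y` and the two vertices of `Y` are the leaves of a double
star on the edge `vz`. -/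
theorem subset_of_not_containsDoubleStar [DecidableEq V] {G : SimpleGraph V}
    (hfree : ¬ ContainsDoubleStar G 2 2) {v z : V} (hvz : G.Adj v z) {X Y : Finset V}
    (hX : ∀ t ∈ X, G.Adj v t) (hzX : z ∉ X) (hXcard : #X = 3)
    (hY : ∀ t ∈ Y, G.Adj z t) (hvY : v ∉ Y) (hYcard : #Y = 2) : Y ⊆ X := by
  by_contra hYX
  obtain ⟨y, hyY, hyX⟩ := not_subset.mp hYX
  have hinter : #(X ∩ Y) < #Y :=
    card_lt_card ⟨inter_subset_right, fun h => hyX (mem_inter.mp (h hyY)).1⟩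
  obtain ⟨X', hX'X, hX'card⟩ := exists_subset_card_eq (s := X \ Y) (n := 2) (by
    have := card_sdiff_add_card_inter X Y
    omega)
  refine hfree ⟨v, z, X', Y, hvz, hX'card, hYcard, ?_, fun h => hzX (mem_sdiff.mp (hX'X h)).1,
    hvY, fun t ht => hX t (mem_sdiff.mp (hX'X ht)).1, hY⟩
  exact disjoint_of_subset_left hX'X sdiff_disjoint

theorem neighborFinset_subset_insert_of_not_containsDoubleStar [Fintype V] [DecidableEq V]
    {G C : SimpleGraph V} [DecidableRel C.Adj] (hfree : ¬ ContainsDoubleStar G 2 2)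
    (hCG : C ≤ G) (hdeg : ∀ x, #(C.neighborFinset x) = 2) {v w w' : V}
    (hvw : G.Adj v w) (hvw' : G.Adj v w') (hww' : w ≠ w') (hw : ¬ C.Adj v w)
    (hw' : ¬ C.Adj v w') : C.neighborFinset w ⊆ insert w' (C.neighborFinset v) := by
  refine subset_of_not_containsDoubleStar hfree hvw (fun t ht => ?_) (by simp [hww', hw])
    (by rw [card_insert_of_notMem (by simpa), hdeg])
    (fun t ht => hCG ((mem_neighborFinset ..).mp ht)) (by simpa using fun h => hw h.symm) (hdeg w)
  rcases mem_insert.mp ht with rfl | ht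
  · exact hvw'
  · exact hCG ((mem_neighborFinset ..).mp ht)

/-- Double count the `C`-edges between `T` and `P`: the hypothesis says that they are at
least as many as all `C`-edges at `P`. -/
theorem neighborFinset_subset_of_le_sum [Fintype V] {C : SimpleGraph V} [DecidableRel C.Adj]
    {k : ℕ} {P T : Finset V} (hP : ∀ p ∈ P, #(C.neighborFinset p) ≤ k)
    (hsum : k * #P ≤ ∑ x ∈ T, #{p ∈ P | C.Adj x p}) : ∀ p ∈ P, C.neighborFinset p ⊆ T := by
  have hsub : ∀ p, {x ∈ T | C.Adj x p} ⊆ C.neighborFinset p := fun p x hx =>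
    (mem_neighborFinset ..).mpr (mem_filter.mp hx).2.symm
  have hle : ∀ p ∈ P, #{x ∈ T | C.Adj x p} ≤ k := fun p hp =>
    (card_le_card (hsub p)).trans (hP p hp)
  replace hsum : k * #P ≤ ∑ p ∈ P, #{x ∈ T | C.Adj x p} :=
    hsum.trans_eq (sum_card_bipartiteAbove_eq_sum_card_bipartiteBelow _)
  have heq : ∀ p ∈ P, #{x ∈ T | C.Adj x p} = k := by
    by_contra! ⟨p, hp, hne⟩
    have := sum_lt_sum hle ⟨p, hp, lt_of_le_of_ne (hle p hp) hne⟩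
    rw [sum_const, smul_eq_mul, mul_comm] at this
    omega
  intro p hp
  rw [← eq_of_subset_of_card_le (hsub p) ((hP p hp).trans (heq p hp).ge)]
  exact filter_subset _ _

theorem card_le_five_of_neighborFinset_subset [Fintype V] [DecidableEq V] {C : SimpleGraph V}
    [DecidableRel C.Adj] (hC : C.Preconnected) (hdeg : ∀ x, #(C.neighborFinset x) = 2)
    {v w w' : V} (hvw : v ≠ w) (hvw' : v ≠ w') (hww' : w ≠ w')
    (hw : C.neighborFinset w ⊆ insert w' (C.neighborFinset v))
    (hw' : C.neighborFinset w' ⊆ insert w (C.neighborFinset v)) : Fintype.card V ≤ 5 := by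
  set P := C.neighborFinset v
  set T : Finset V := {v, w, w'}
  have hv : {p ∈ P | C.Adj v p} = P :=
    filter_true_of_mem fun p hp => (mem_neighborFinset ..).mp hp
  have hadjP : ∀ {a b}, C.neighborFinset a ⊆ insert b P → 1 ≤ #{p ∈ P | C.Adj a p} := by
    intro a b hab
    have : C.neighborFinset a ⊆ insert b {p ∈ P | C.Adj a p} := fun y hy => by
      rcases mem_insert.mp (hab hy) with rfl | hyP
      · exact mem_insert_self _ _
      · exact mem_insert_of_mem (mem_filter.mpr ⟨hyP, (mem_neighborFinset ..).mp hy⟩)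
    have := (card_le_card this).trans (card_insert_le _ _)
    have := hdeg a
    omega
  -- `v`, `w`, `w'` send `2 + 1 + 1` cycle edges to the two vertices of `P`.
  have hsum : 2 * #P ≤ ∑ x ∈ T, #{p ∈ P | C.Adj x p} := by
    rw [sum_insert (by simp [hvw, hvw']), sum_pair hww', hv, hdeg v]
    have := hadjP hw
    have := hadjP hw'
    omega
  have hPT := neighborFinset_subset_of_le_sum (fun p _ => (hdeg p).le) hsum
  have huniv : T ∪ P = univ := by
    refine hC.eq_univ_of_adj_mem ⟨v, by simp [T]⟩ fun x hx y hxy => ?_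
    have hy : y ∈ C.neighborFinset x := (mem_neighborFinset ..).mpr hxy
    rcases mem_union.mp hx with hxT | hxP
    · simp only [T, mem_insert, mem_singleton] at hxT
      rcases hxT with rfl | rfl | rfl
      · exact mem_union_right _ hy
      · rcases mem_insert.mp (hw hy) with rfl | hyP
        · simp [T]
        · exact mem_union_right _ hyP
      · rcases mem_insert.mp (hw' hy) with rfl | hyP
        · simp [T]
        · exact mem_union_right _ hyP
    · exact mem_union_left _ (hPT x hxP hy)
  calc Fintype.card V = #(T ∪ P) := by rw [huniv, card_univ]
    _ ≤ #T + #P := card_union_le _ _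
    _ ≤ 3 + 2 := add_le_add card_le_three (hdeg v).le

end SimpleGraph

theorem stmt1_general {V : Type*} [Fintype V] [DecidableEq V] (G : SimpleGraph V) [DecidableRel G.Adj]
    (hn : 6 ≤ Fintype.card V)
    (hham : ∃ (u : V) (c : G.Walk u u), c.IsHamiltonianCycle)
    (hfree : ¬ ContainsDoubleStar G 2 2) :
    ∀ v : V, G.degree v ≤ 3 := by
  intro v
  by_contra! hdeg
  obtain ⟨u, c, hc⟩ := hham
  classical
  set C := c.toSubgraph.spanningCoe
  have hCG : C ≤ G := c.toSubgraph.spanningCoe_le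
  have hdegC : ∀ x, #(C.neighborFinset x) = 2 := fun x => hc.card_neighborFinset_spanningCoe x
  have hchords : 1 < #(G.neighborFinset v \ C.neighborFinset v) := by
    have := le_card_sdiff (C.neighborFinset v) (G.neighborFinset v)
    rw [card_neighborFinset_eq_degree, hdegC] at this
    omega
  obtain ⟨w, hw, w', hw', hww'⟩ := one_lt_card.mp hchords
  simp only [mem_sdiff, mem_neighborFinset] at hw hw'
  have hNw := neighborFinset_subset_insert_of_not_containsDoubleStar hfree hCG hdegC
    hw.1 hw'.1 hww' hw.2 hw'.2
  have hNw' := neighborFinset_subset_insert_of_not_containsDoubleStar hfree hCG hdegC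
    hw'.1 hw.1 hww'.symm hw'.2 hw.2
  have := card_le_five_of_neighborFinset_subset hc.preconnected_spanningCoe hdegC
    hw.1.ne hw'.1.ne hww' hNw hNw'
  omega

theorem stmt1 {V : Type*} [Fintype V] [DecidableEq V] (G : SimpleGraph V) [DecidableRel G.Adj]
    (hn : 6 ≤ Fintype.card V)
    (hham : ∃ (u : V) (c : G.Walk u u), c.IsHamiltonianCycle)
    (hop : IsOuterplanar G) (hfree : ¬ ContainsDoubleStar G 2 2) :
    ∀ v : V, G.degree v ≤ 3 :=
  stmt1_general G hn hham hfree
end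

section
/- Let G be a 2-connected outerplanar graph on n ≥ 6 vertices that contains no subgraph isomorphic to the double star S_{2,2}. Then G has at most ⌊5n/4⌋ edges. -/
open SimpleGraph Finset

/-- A graph is 2-connected: connected, and deleting any single vertex leaves a
connected graph. -/
def IsTwoConnected {V : Type*} (G : SimpleGraph V) : Prop :=
  G.Connected ∧ ∀ v : V, (G.induce {v}ᶜ).Connected

/-!
Relabel the vertices by their position in a one-page book embedding, so that `G` becomes a
graph on `Fin n` in which no two edges cross. For a shortest edge `uw` spanning the gap between
`a` and `a + 1`, 2-connectivity yields an edge leaving `(u, a]` that avoids `u` (or leaving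
`[a + 1, w)` that avoids `w`), and non-crossing forces it to be a shorter spanning edge. Hence
consecutive vertices are adjacent and `0, 1, …, n - 1` is a Hamilton cycle.

A chord `x ~ x + k` with `3 ≤ k ≤ n - 3`, together with the cycle edges at its ends, is an
`S_{2,2}`, so every chord has the form `w ~ w + 2`. Two such chords starting at `w` and `w + d`
with `d ∈ {1, 2, 3}` either cross or again span an `S_{2,2}`. So the starting points of chords
are at least 4 apart around the cycle, there are at most `n / 4` chords, and `|E| ≤ n + n / 4`.
-/

open scoped Fin.NatCast Fin.CommRing

section General

variable {V W : Type*} {G : SimpleGraph V} {G' : SimpleGraph W}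

theorem containsDoubleStar_two_two_of_nodup {x y x₁ x₂ y₁ y₂ : V}
    (hnd : [x, y, x₁, x₂, y₁, y₂].Nodup) (hxy : G.Adj x y) (hx₁ : G.Adj x x₁)
    (hx₂ : G.Adj x x₂) (hy₁ : G.Adj y y₁) (hy₂ : G.Adj y y₂) : ContainsDoubleStar G 2 2 := by
  classical
  simp only [List.nodup_cons, List.mem_cons, List.not_mem_nil, or_false, not_or,
    List.nodup_nil, and_true] at hnd
  refine ⟨x, y, {x₁, x₂}, {y₁, y₂}, hxy, ?_, ?_, ?_, ?_, ?_, ?_, ?_⟩ <;>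
    simp_all [eq_comm, or_imp, forall_and]

theorem ContainsDoubleStar.of_injective_hom (f : G →g G') (hf : Function.Injective f) {p q : ℕ}
    (h : ContainsDoubleStar G p q) : ContainsDoubleStar G' p q := by
  obtain ⟨x, y, X, Y, hxy, hX, hY, hXY, hyX, hxY, hxX, hyY⟩ := h
  refine ⟨f x, f y, X.map ⟨f, hf⟩, Y.map ⟨f, hf⟩, f.map_adj hxy, by simpa, by simpa,
    Finset.disjoint_map _ |>.mpr hXY, by simpa [hf.eq_iff], by simpa [hf.eq_iff], ?_, ?_⟩ <;>
    simpa using fun v hv => f.map_adj (by solve_by_elim)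

theorem SimpleGraph.Connected.exists_adj_of_mem_of_notMem (hG : G.Connected) {S : Set V}
    {a b : V} (ha : a ∈ S) (hb : b ∉ S) : ∃ x ∈ S, ∃ y ∉ S, G.Adj x y := by
  obtain ⟨p⟩ := hG.preconnected a b
  obtain ⟨d, -, hd₁, hd₂⟩ := p.exists_boundary_dart S ha hb
  exact ⟨d.fst, hd₁, d.snd, hd₂, d.adj⟩

theorem IsTwoConnected.exists_ne (hG : IsTwoConnected G) (v : V) : ∃ w, w ≠ v :=
  let ⟨w⟩ := (hG.2 v).nonempty
  ⟨w, w.2⟩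

theorem IsTwoConnected.exists_adj_of_mem_of_notMem (hG : IsTwoConnected G) {S : Set V}
    {v a b : V} (hv : v ∉ S) (ha : a ∈ S) (hb : b ∉ S) (hbv : b ≠ v) :
    ∃ x ∈ S, ∃ y ∉ S, y ≠ v ∧ G.Adj x y := by
  obtain ⟨x, hx, y, hy, hxy⟩ := (hG.2 v).exists_adj_of_mem_of_notMem
    (S := {x | x.1 ∈ S}) (a := ⟨a, ne_of_mem_of_not_mem ha hv⟩) (b := ⟨b, hbv⟩) ha hb
  exact ⟨x, hx, y, hy, y.2, hxy⟩

theorem IsTwoConnected.of_iso (e : G ≃g G') (hG : IsTwoConnected G) : IsTwoConnected G' := by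
  refine ⟨e.connected_iff.mp hG.1, fun w => ?_⟩
  refine (hG.2 (e.symm w)).map (SimpleGraph.induceHom e.toHom fun x hx => ?_) ?_
  · simpa [e.eq_symm_apply.not, eq_comm] using hx
  · rintro ⟨y, hy⟩
    exact ⟨⟨e.symm y, by simpa [e.symm_apply_eq.not] using hy⟩,
      Subtype.ext (e.apply_symm_apply y)⟩

end General

section FinArith

variable {n : ℕ} [NeZero n]

theorem Fin.add_one_eq_zero_of_val_add_one_eq {a : Fin n} (h : a.val + 1 = n) : a + 1 = 0 := by
  rw [← Fin.cast_val_eq_self a, ← Nat.cast_add_one, h, Fin.natCast_self]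

theorem Fin.nodup_map_add_natCast (w : Fin n) {l : List ℕ} (hl : l.Nodup)
    (hlt : ∀ k ∈ l, k < n) : (l.map fun k : ℕ => w + (k : Fin n)).Nodup :=
  hl.map_on fun x hx y hy hxy => by
    have := congrArg Fin.val (add_left_cancel hxy)
    rwa [Fin.val_cast_of_lt (hlt x hx), Fin.val_cast_of_lt (hlt y hy)] at this

theorem Fin.exists_eq_add_natCast_or_eq_add_natCast {x y : Fin n} (hxy : x ≠ y) :
    ∃ k : ℕ, 1 ≤ k ∧ 2 * k ≤ n ∧ (y = x + k ∨ x = y + k) := by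
  obtain ⟨k, hkn, rfl⟩ : ∃ k < n, y = x + (k : Fin n) := ⟨(y - x).val, (y - x).isLt, by simp⟩
  have hpos : k ≠ 0 := by rintro rfl; simp at hxy
  by_cases hk : 2 * k ≤ n
  · exact ⟨k, by omega, hk, .inl rfl⟩
  · refine ⟨n - k, by omega, by omega, .inr ?_⟩
    rw [add_assoc, ← Nat.cast_add, Nat.add_sub_cancel' hkn.le, Fin.natCast_self, add_zero]

theorem Fin.eq_add_natCast_sub_of_add_natCast_eq {w w' : Fin n} {k k' : ℕ}
    (h : w + (k : Fin n) = w' + k') (hk : k ≤ k') : w = w' + ((k' - k : ℕ) : Fin n) := by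
  rw [Nat.cast_sub hk, ← add_sub_assoc, ← h, add_sub_cancel_right]

end FinArith

def IsNoncrossing {n : ℕ} (H : SimpleGraph (Fin n)) : Prop :=
  ∀ a b c d, H.Adj a b → H.Adj c d → ¬ (a < c ∧ c < b ∧ b < d)

namespace IsNoncrossing

variable {n : ℕ} {H : SimpleGraph (Fin n)}

theorem le_and_le_of_adj (hH : IsNoncrossing H) {u w c d : Fin n} (huw : H.Adj u w)
    (huc : u < c) (hcw : c < w) (hcd : H.Adj c d) : u ≤ d ∧ d ≤ w := by
  by_contra h
  rcases not_and_or.mp h with h | h <;> rw [not_le] at h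
  · exact hH d c u w hcd.symm huw ⟨h, huc, hcw⟩
  · exact hH u w c d huw hcd ⟨huc, hcw, h⟩

theorem adj_of_val_eq_succ_of_adj (hH : IsNoncrossing H) (h2 : IsTwoConnected H) {a b : Fin n}
    (hab : b.val = a.val + 1) {u w : Fin n} (huw : H.Adj u w) (hua : u ≤ a) (hbw : b ≤ w) :
    H.Adj a b := by
  induction hk : w.val - u.val using Nat.strong_induction_on generalizing u w with
  | _ k ih =>
  rcases hua.lt_or_eq with hua | rfl
  · obtain ⟨c, ⟨huc, hca⟩, d, hd, hdu, hcd⟩ := h2.exists_adj_of_mem_of_notMem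
      (S := {x | u < x ∧ x ≤ a}) (v := u) (by simp) ⟨hua, le_rfl⟩ (b := w) (by simp; omega)
      huw.ne.symm
    obtain ⟨hud, hdw⟩ := hH.le_and_le_of_adj huw huc (by omega) hcd
    have hbd : b ≤ d := by
      simp only [Set.mem_ofPred_eq, not_and_or, not_lt, not_le] at hd
      have := Fin.ext_iff.not.mp hdu
      omega
    exact ih (d.val - c.val) (by omega) hcd hca hbd rfl
  · rcases hbw.lt_or_eq with hbw | rfl
    · obtain ⟨c, ⟨hbc, hcw⟩, d, hd, hdw, hcd⟩ := h2.exists_adj_of_mem_of_notMem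
        (S := {x | b ≤ x ∧ x < w}) (v := w) (by simp) ⟨le_rfl, hbw⟩ (b := u) (by simp; omega)
        huw.ne
      obtain ⟨hud, hdw'⟩ := hH.le_and_le_of_adj huw (by omega) hcw hcd
      have hdu : d = u := by
        simp only [Set.mem_ofPred_eq, not_and_or, not_lt, not_le] at hd
        have := Fin.ext_iff.not.mp hdw
        omega
      subst hdu
      exact ih (c.val - d.val) (by omega) hcd.symm le_rfl hbc rfl
    · exact huw

theorem adj_of_val_eq_succ (hH : IsNoncrossing H) (h2 : IsTwoConnected H) {a b : Fin n}
    (hab : b.val = a.val + 1) : H.Adj a b := by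
  obtain ⟨u, hua, w, hwa, huw⟩ := h2.1.exists_adj_of_mem_of_notMem (S := {x | x ≤ a})
    (a := a) (by simp) (b := b) (by simp; omega)
  exact hH.adj_of_val_eq_succ_of_adj h2 hab huw hua (by simp at hwa; omega)

theorem adj_of_isMin_of_isMax (hH : IsNoncrossing H) (h2 : IsTwoConnected H) {a b : Fin n}
    (ha : ∀ x, a ≤ x) (hb : ∀ x, x ≤ b) : H.Adj a b := by
  classical
  obtain ⟨a', ha'⟩ := h2.exists_ne a
  obtain ⟨x, hx, w₀, -, hxw₀⟩ := h2.1.exists_adj_of_mem_of_notMem (S := {a}) rfl ha'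
  obtain ⟨w, haw, hmax⟩ := (Finset.univ.filter (H.Adj a)).exists_max_image id
    ⟨w₀, by simpa [← Set.mem_singleton_iff.mp hx]⟩
  simp only [Finset.mem_filter, Finset.mem_univ, true_and, id] at haw hmax
  by_contra hab
  have hwb : w < b := (hb w).lt_of_ne (by rintro rfl; exact hab haw)
  obtain ⟨c, hwc, d, hdw, hdw', hcd⟩ := h2.exists_adj_of_mem_of_notMem (S := {x | w < x})
    (v := w) (by simp) hwb (b := a) (by simpa using ha w) haw.ne
  simp only [Set.mem_ofPred_eq, not_lt] at hwc hdw
  rcases (ha d).lt_or_eq with had | rfl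
  · exact absurd (hH.le_and_le_of_adj haw had (hdw.lt_of_ne hdw') hcd.symm).2 hwc.not_ge
  · exact absurd (hmax c hcd.symm) hwc.not_ge

theorem adj_add_one [NeZero n] (hH : IsNoncrossing H) (h2 : IsTwoConnected H) (a : Fin n) :
    H.Adj a (a + 1) := by
  by_cases ha : a.val + 1 < n
  · exact hH.adj_of_val_eq_succ h2 (Fin.val_add_one_of_lt' ha)
  · have hlast : ∀ x : Fin n, x ≤ a := fun x => by omega
    rw [Fin.add_one_eq_zero_of_val_add_one_eq (by omega)]
    exact (hH.adj_of_isMin_of_isMax h2 Fin.zero_le hlast).symm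

theorem comap_add_one [NeZero n] (hH : IsNoncrossing H) : IsNoncrossing (H.comap (· + 1)) := by
  rintro a b c d hab hcd ⟨hac, hcb, hbd⟩
  simp only [SimpleGraph.comap_adj] at hab hcd
  have hb : (b + 1).val = b.val + 1 := Fin.val_add_one_of_lt' (by omega)
  have hc : (c + 1).val = c.val + 1 := Fin.val_add_one_of_lt' (by omega)
  have ha : (a + 1).val = a.val + 1 := Fin.val_add_one_of_lt' (by omega)
  by_cases hd : d.val + 1 < n
  · have hd' : (d + 1).val = d.val + 1 := Fin.val_add_one_of_lt' hd
    exact hH _ _ _ _ hab hcd ⟨by omega, by omega, by omega⟩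
  · have hd' : (d + 1).val = 0 := by
      rw [Fin.add_one_eq_zero_of_val_add_one_eq (by omega), Fin.val_zero]
    exact hH _ _ _ _ hcd.symm hab ⟨by omega, by omega, by omega⟩

theorem comap_add_natCast [NeZero n] (hH : IsNoncrossing H) (k : ℕ) :
    IsNoncrossing (H.comap (· + (k : Fin n))) := by
  induction k with
  | zero => convert hH; ext; simp
  | succ k ih =>
    convert ih.comap_add_one using 1
    ext a b
    simp [add_comm (1 : Fin n)]

theorem not_adj_add_one_add_three [NeZero n] (hH : IsNoncrossing H) (hn : 4 ≤ n) {w : Fin n}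
    (h₀ : H.Adj w (w + 2)) : ¬ H.Adj (w + 1) (w + 3) := by
  intro h₁
  have hval : ∀ k : ℕ, k < n → (k : Fin n).val = k := fun k hk => Fin.val_cast_of_lt hk
  -- rotating by `w` moves the four endpoints to `0 < 1 < 2 < 3`
  refine hH.comap_add_natCast w.val ((0 : ℕ) : Fin n) ((2 : ℕ) : Fin n) ((1 : ℕ) : Fin n)
    ((3 : ℕ) : Fin n) (by simpa [add_comm] using h₀) (by simpa [add_comm] using h₁) ?_
  simp only [Fin.lt_def, hval 0 (by omega), hval 1 (by omega), hval 2 (by omega),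
    hval 3 (by omega)]
  omega

end IsNoncrossing

section Cycle

variable {n : ℕ} [NeZero n] {H : SimpleGraph (Fin n)}

theorem containsDoubleStar_of_nodup_offsets (w : Fin n) {x y x₁ x₂ y₁ y₂ : ℕ}
    (hnd : [x, y, x₁, x₂, y₁, y₂].Nodup) (hlt : ∀ k ∈ [x, y, x₁, x₂, y₁, y₂], k < n)
    (hxy : H.Adj (w + x) (w + y)) (hx₁ : H.Adj (w + x) (w + x₁)) (hx₂ : H.Adj (w + x) (w + x₂))
    (hy₁ : H.Adj (w + y) (w + y₁)) (hy₂ : H.Adj (w + y) (w + y₂)) : ContainsDoubleStar H 2 2 :=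
  containsDoubleStar_two_two_of_nodup (Fin.nodup_map_add_natCast w hnd hlt) hxy hx₁ hx₂ hy₁ hy₂

variable (hcyc : ∀ a : Fin n, H.Adj a (a + 1))
include hcyc

theorem adj_add_natCast_add_one (w : Fin n) (k : ℕ) : H.Adj (w + k) (w + (k + 1 : ℕ)) := by
  simpa [add_assoc] using hcyc (w + k)

theorem containsDoubleStar_of_adj_add_natCast {w : Fin n} {k : ℕ} (hk : 3 ≤ k) (hkn : k + 3 ≤ n)
    (h : H.Adj w (w + k)) : ContainsDoubleStar H 2 2 := by
  have step := adj_add_natCast_add_one hcyc w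
  refine containsDoubleStar_of_nodup_offsets w (x := 0) (y := k) (x₁ := 1) (x₂ := n - 1)
    (y₁ := k + 1) (y₂ := k - 1) (by simp; omega) (by simp; omega) (by simpa using h) (step 0)
    ?_ (step k) ?_
  · simpa [Nat.sub_add_cancel NeZero.one_le] using (step (n - 1)).symm
  · simpa [Nat.sub_add_cancel (show 1 ≤ k by omega)] using (step (k - 1)).symm

theorem not_adj_add_natCast_add_two (hH : IsNoncrossing H) (hfree : ¬ ContainsDoubleStar H 2 2)
    (hn : 6 ≤ n) {w : Fin n} (hw : H.Adj w (w + 2)) {d : ℕ} (hd₁ : 1 ≤ d) (hd₃ : d ≤ 3) :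
    ¬ H.Adj (w + d) (w + d + 2) := by
  intro h
  have step := adj_add_natCast_add_one hcyc w
  have hw' : H.Adj (w + (0 : ℕ)) (w + (2 : ℕ)) := by simpa using hw
  interval_cases d
  · exact hH.not_adj_add_one_add_three (by omega) hw (by convert h using 1 <;> push_cast <;> ring)
  · refine hfree (containsDoubleStar_of_nodup_offsets w (x := 2) (y := 4) (x₁ := 0) (x₂ := 1)
      (y₁ := 3) (y₂ := 5) (by simp) (by simp; omega) ?_ hw'.symm (step 1).symm (step 3).symm
      (step 4))
    convert h using 1; push_cast; ring
  · refine hfree (containsDoubleStar_of_nodup_offsets w (x := 2) (y := 3) (x₁ := 0) (x₂ := 1)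
      (y₁ := 4) (y₂ := 5) (by simp) (by simp; omega) (step 2) hw'.symm (step 1).symm (step 3) ?_)
    convert h using 1; push_cast; ring

end Cycle

section Count

variable {n : ℕ} [NeZero n] {H : SimpleGraph (Fin n)} [DecidableRel H.Adj]

variable (H) in
def shortChordStarts : Finset (Fin n) :=
  Finset.univ.filter fun w => H.Adj w (w + 2)

variable (hcyc : ∀ a : Fin n, H.Adj a (a + 1)) (hfree : ¬ ContainsDoubleStar H 2 2)
include hcyc hfree

theorem four_mul_card_shortChordStarts_le (hH : IsNoncrossing H) (hn : 6 ≤ n) :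
    4 * (shortChordStarts H).card ≤ n := by
  have hsep : ∀ w ∈ shortChordStarts H, ∀ w' ∈ shortChordStarts H, ∀ k k' : ℕ, k < k' → k' < 4 →
      w + (k : Fin n) ≠ w' + k' := by
    intro w hw w' hw' k k' hkk' hk' h
    simp only [shortChordStarts, Finset.mem_filter, Finset.mem_univ, true_and] at hw hw'
    rw [Fin.eq_add_natCast_sub_of_add_natCast_eq h hkk'.le] at hw
    exact not_adj_add_natCast_add_two hcyc hH hfree hn hw' (by omega) (by omega) hw
  have hinj : Set.InjOn (fun p : Fin n × ℕ => p.1 + (p.2 : Fin n))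
      ↑(shortChordStarts H ×ˢ Finset.range 4) := by
    rintro ⟨w, k⟩ hp ⟨w', k'⟩ hq (h : w + (k : Fin n) = w' + k')
    simp only [Finset.coe_product, Set.mem_prod, Finset.mem_coe, Finset.mem_range] at hp hq
    rcases lt_trichotomy k k' with hkk' | rfl | hkk'
    · exact absurd h (hsep w hp.1 w' hq.1 k k' hkk' hq.2)
    · rw [(add_left_inj _).mp h]
    · exact absurd h.symm (hsep w' hq.1 w hp.1 k' k hkk' hp.2)
  simpa [mul_comm] using Finset.card_le_card_of_injOn _ (fun _ _ => Finset.mem_univ _) hinj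

theorem edgeSet_subset_cycle_union_shortChords :
    H.edgeSet ⊆ ↑(Finset.univ.image (fun w : Fin n => s(w, w + 1)) ∪
      (shortChordStarts H).image fun w => s(w, w + 2)) := by
  suffices h : ∀ (a : Fin n) (k : ℕ), 1 ≤ k → 2 * k ≤ n → H.Adj a (a + k) →
      s(a, a + k) ∈ Finset.univ.image (fun w : Fin n => s(w, w + 1)) ∪
        (shortChordStarts H).image fun w => s(w, w + 2) by
    intro e he
    induction e using Sym2.ind with
    | _ x y =>
    rw [SimpleGraph.mem_edgeSet] at he
    obtain ⟨k, hk₁, hk₂, rfl | rfl⟩ := Fin.exists_eq_add_natCast_or_eq_add_natCast he.ne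
    · exact h x k hk₁ hk₂ he
    · rw [Sym2.eq_swap]
      exact h y k hk₁ hk₂ he.symm
  intro a k hk₁ hk₂ hadj
  obtain rfl | rfl : k = 1 ∨ k = 2 := by
    by_contra hk
    exact hfree (containsDoubleStar_of_adj_add_natCast hcyc (by omega) (by omega) hadj)
  · exact Finset.mem_union_left _ (by simp)
  · exact Finset.mem_union_right _
      (Finset.mem_image_of_mem _ (by simpa [shortChordStarts] using hadj))

theorem card_edgeSet_le (hH : IsNoncrossing H) (hn : 6 ≤ n) :
    Nat.card H.edgeSet ≤ 5 * n / 4 := by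
  have hM := four_mul_card_shortChordStarts_le hcyc hfree hH hn
  calc Nat.card H.edgeSet
      ≤ (Finset.univ.image (fun w : Fin n => s(w, w + 1)) ∪
          (shortChordStarts H).image fun w => s(w, w + 2)).card := by
        rw [Nat.card_coe_set_eq, ← Set.ncard_coe_finset]
        exact Set.ncard_le_ncard (edgeSet_subset_cycle_union_shortChords hcyc hfree)
    _ ≤ n + (shortChordStarts H).card :=
        (Finset.card_union_le _ _).trans (add_le_add (Finset.card_image_le.trans (by simp))
          Finset.card_image_le)
    _ ≤ 5 * n / 4 := by omega

end Count

theorem stmt2_general {V : Type*} (G : SimpleGraph V)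
    (hn : 6 ≤ Nat.card V) (h2 : IsTwoConnected G) (hop : IsOuterplanar G)
    (hfree : ¬ ContainsDoubleStar G 2 2) :
    Nat.card G.edgeSet ≤ 5 * Nat.card V / 4 := by
  classical
  obtain ⟨σ, hσ, hcross⟩ := hop
  have : NeZero (Nat.card V) := ⟨by omega⟩
  let e := Equiv.ofBijective σ hσ
  let iso : G.comap e.symm ≃g G := SimpleGraph.Iso.comap e.symm G
  have hH : IsNoncrossing (G.comap e.symm) := fun a b c d hab hcd => by
    simpa [e, Equiv.ofBijective_apply_symm_apply] using hcross _ _ _ _ hab hcd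
  have hcyc := hH.adj_add_one (h2.of_iso iso.symm)
  have hfree' : ¬ ContainsDoubleStar (G.comap e.symm) 2 2 := fun h =>
    hfree (h.of_injective_hom iso.toHom iso.injective)
  rw [← Nat.card_congr iso.mapEdgeSet]
  exact card_edgeSet_le hcyc hfree' hH hn

theorem stmt2 {V : Type*} [Fintype V] (G : SimpleGraph V)
    (hn : 6 ≤ Nat.card V) (h2 : IsTwoConnected G) (hop : IsOuterplanar G)
    (hfree : ¬ ContainsDoubleStar G 2 2) :
    Nat.card G.edgeSet ≤ 5 * Nat.card V / 4 :=
  stmt2_general G hn h2 hop hfree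
end

section
/- Let G be a 2-connected outerplanar graph on n ≥ 6 vertices with a Hamilton cycle v_1 v_2 … v_n v_1, such that G contains no subgraph isomorphic to S_{2,2} and has maximum degree at most 3. Then no two consecutive vertices on the Hamilton cycle can both have degree 3; consequently the number of degree-3 vertices of G is at most ⌊n/2⌋. -/
open SimpleGraph Finset

namespace DoubleStarAux

def Icross (a b c d : ℕ) : Prop :=
  (min a b < min c d ∧ min c d < max a b ∧ max a b < max c d) ∨
  (min c d < min a b ∧ min a b < max c d ∧ max c d < max a b)

lemma icross_swap {a b c d : ℕ} (h : Icross a b c d) : Icross a b d c := by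
  unfold Icross at *; omega

lemma gen_icross {n P s2 s3 s4 : ℕ} (hP : P < n) (h2 : 0 < s2) (h23 : s2 < s3)
    (h34 : s3 < s4) (h4 : s4 < n) :
    Icross ((P+0) % n) ((P+s3) % n) ((P+s2) % n) ((P+s4) % n) := by
  have fact : ∀ s, s < n → (P+s) % n < n ∧ ((P+s) % n = P + s ∨ (P+s) % n + n = P + s) := by
    intro s hs
    refine ⟨Nat.mod_lt _ (by omega), ?_⟩
    rcases Nat.lt_or_ge (P+s) n with h | h
    · left; exact Nat.mod_eq_of_lt h
    · right; rw [Nat.mod_eq_sub_mod h, Nat.mod_eq_of_lt (by omega)]; omega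
  obtain ⟨a1, a2⟩ := fact 0 (by omega)
  obtain ⟨b1, b2⟩ := fact s2 (by omega)
  obtain ⟨c1, c2⟩ := fact s3 (by omega)
  obtain ⟨d1, d2⟩ := fact s4 h4
  unfold Icross; omega

theorem propagate {P : ℕ → Prop} {a b s0 : ℕ} (ha : a ≤ s0) (hb : s0 ≤ b) (h0 : P s0)
    (up : ∀ s, a ≤ s → s < b → P s → P (s+1))
    (dn : ∀ s, a < s → s ≤ b → P s → P (s-1)) :
    ∀ s, a ≤ s → s ≤ b → P s := by
  have hup : ∀ d, s0 + d ≤ b → P (s0 + d) := by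
    intro d
    induction d with
    | zero => intro _; simpa using h0
    | succ d ih =>
      intro h
      have h1 := up (s0 + d) (by omega) (by omega) (ih (by omega))
      have e : s0 + (d+1) = (s0 + d) + 1 := by omega
      rw [e]; exact h1
  have hdn : ∀ d, a ≤ s0 - d → P (s0 - d) := by
    intro d
    induction d with
    | zero => intro _; simpa using h0
    | succ d ih =>
      intro h
      by_cases hd : d < s0
      · have h1 := dn (s0 - d) (by omega) (by omega) (ih (by omega))
        have e : s0 - (d+1) = (s0 - d) - 1 := by omega
        rw [e]; exact h1
      · have e : s0 - (d+1) = s0 - d := by omega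
        rw [e]; exact ih (by omega)
  intro s h1 h2
  rcases le_total s0 s with h | h
  · have h3 := hup (s - s0) (by omega)
    have e : s0 + (s - s0) = s := by omega
    rwa [e] at h3
  · have h3 := hdn (s0 - s) (by omega)
    have e : s0 - (s0 - s) = s := by omega
    rwa [e] at h3

section zmod
variable {n : ℕ} [NeZero n]

lemma cast_val (x : ZMod n) : ((x.val : ℕ) : ZMod n) = x := ZMod.natCast_rightInverse x

lemma natc_inj {a b : ℕ} (ha : a < n) (hb : b < n) (h : (a : ZMod n) = b) : a = b := by
  have h2 := congrArg ZMod.val h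
  rwa [ZMod.val_natCast, ZMod.val_natCast, Nat.mod_eq_of_lt ha, Nat.mod_eq_of_lt hb] at h2

lemma natc_ne_zero {a : ℕ} (h0 : 0 < a) (h : a < n) : (a : ZMod n) ≠ 0 := by
  intro he
  have : a = 0 := natc_inj h (Nat.pos_of_ne_zero (NeZero.ne n)) (by simpa using he)
  omega

lemma cast_n_sub {c : ℕ} (h : c ≤ n) : ((n - c : ℕ) : ZMod n) = -(c : ZMod n) := by
  rw [Nat.cast_sub h, ZMod.natCast_self, zero_sub]

lemma castn1 (hn : 1 ≤ n) : ((n - 1 : ℕ) : ZMod n) = -1 := by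
  rw [cast_n_sub hn, Nat.cast_one]

end zmod

theorem classify {n : ℕ} [NeZero n] (hn : 3 ≤ n) (p : ZMod n → ℕ)
    (hlt : ∀ i, p i < n) (hinj : Function.Injective p)
    (hcr : ∀ i j : ZMod n, ¬ Icross (p i) (p (i+1)) (p j) (p (j+1))) :
    ∃ i₀ : ZMod n, (∀ s : ℕ, s < n → p (i₀ + (s : ZMod n)) = s) ∨
      (∀ s : ℕ, s < n → p (i₀ - (s : ZMod n)) = s) := by
  classical
  have hnpos : 0 < n := by omega
  -- surjectivity onto [0, n)
  have hsurj : ∀ t : ℕ, t < n → ∃ i, p i = t := by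
    intro t ht
    have h1 : (Finset.univ.image p) ⊆ Finset.range n := by
      intro x hx
      obtain ⟨i, _, rfl⟩ := Finset.mem_image.1 hx
      exact Finset.mem_range.2 (hlt i)
    have h2 : (Finset.univ.image p).card = n := by
      rw [Finset.card_image_of_injective _ hinj, Finset.card_univ, ZMod.card]
    have h3 : Finset.univ.image p = Finset.range n :=
      Finset.eq_of_subset_of_card_le h1 (by rw [h2, Finset.card_range])
    have h4 : t ∈ Finset.univ.image p := by rw [h3]; exact Finset.mem_range.2 ht
    obtain ⟨i, _, hi⟩ := Finset.mem_image.1 h4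
    exact ⟨i, hi⟩
  have hfex : ∀ t : ℕ, ∃ i : ZMod n, (t < n → p i = t) := by
    intro t
    by_cases h : t < n
    · obtain ⟨i, hi⟩ := hsurj t h; exact ⟨i, fun _ => hi⟩
    · exact ⟨0, fun h' => absurd h' h⟩
  choose f hfval using hfex
  have hfeq : ∀ {j : ZMod n} {t : ℕ}, t < n → p j = t → j = f t := by
    intro j t ht hj
    exact hinj (by rw [hfval t ht, hj])
  -- THE ADJACENCY STEP
  have Astep : ∀ t : ℕ, t + 1 < n → f (t+1) = f t + 1 ∨ f (t+1) = f t - 1 := by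
    intro t ht
    set Cut : ZMod n → Prop :=
      fun i => (p i ≤ t ∧ t < p (i+1)) ∨ (p (i+1) ≤ t ∧ t < p i) with hCutdef
    have hCex : ∃ i, Cut i := by
      by_contra hc
      push_neg at hc
      have hiff : ∀ i : ZMod n, (p i ≤ t ↔ p (i+1) ≤ t) := by
        intro i
        have h1 := hc i
        simp only [hCutdef] at h1
        omega
      have hprop : ∀ (k : ℕ) (i : ZMod n), (p i ≤ t ↔ p (i + (k : ZMod n)) ≤ t) := by
        intro k
        induction k with
        | zero => intro i; simp
        | succ k ih =>
          intro i
          have e : i + ((k+1 : ℕ) : ZMod n) = (i + (k : ZMod n)) + 1 := by push_cast; ring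
          rw [e]
          exact (ih i).trans (hiff _)
      have h1 : p (f t) = t := hfval t (by omega)
      have h2 : p (f (n-1)) = n-1 := hfval (n-1) (by omega)
      have e : f t + (((f (n-1) - f t).val : ℕ) : ZMod n) = f (n-1) := by
        rw [cast_val, add_comm, sub_add_cancel]
      have h3 := hprop ((f (n-1) - f t).val) (f t)
      rw [e] at h3
      omega
    obtain ⟨c0, hc0⟩ := hCex
    obtain ⟨istar, hiS, hikey⟩ := Finset.exists_max_image (Finset.univ.filter Cut)
      (fun i => (min (p i) (p (i+1))) * n + (n - 1 - max (p i) (p (i+1))))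
      ⟨c0, Finset.mem_filter.2 ⟨Finset.mem_univ _, hc0⟩⟩
    set lo := min (p istar) (p (istar+1)) with hlo
    set hi := max (p istar) (p (istar+1)) with hhi
    have hCuti : Cut istar := (Finset.mem_filter.1 hiS).2
    have hlot : lo ≤ t ∧ t < hi := by
      simp only [hCutdef] at hCuti; rw [hlo, hhi]; omega
    have hhilt : hi < n := by
      rw [hhi]; have := hlt istar; have := hlt (istar+1); omega
    have hlolt : lo < hi := by omega
    have L1 : ∀ j, Cut j → min (p j) (p (j+1)) ≤ lo ∧
        (min (p j) (p (j+1)) = lo → hi ≤ max (p j) (p (j+1))) := by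
      intro j hj
      have hk : min (p j) (p (j+1)) * n + (n - 1 - max (p j) (p (j+1))) ≤
          min (p istar) (p (istar+1)) * n + (n - 1 - max (p istar) (p (istar+1))) :=
        hikey j (Finset.mem_filter.2 ⟨Finset.mem_univ _, hj⟩)
      rw [← hlo, ← hhi] at hk
      have hb2 : max (p j) (p (j+1)) ≤ n - 1 := by have := hlt j; have := hlt (j+1); omega
      constructor
      · by_contra hcon
        push_neg at hcon
        have h1 : (lo+1) * n ≤ (min (p j) (p (j+1))) * n := Nat.mul_le_mul_right n (by omega)
        have h2 : (lo+1)*n = lo*n + n := by ring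
        omega
      · intro heq
        rw [heq] at hk
        omega
    have Ledge : ∀ j, ((lo < p j ∧ p j < hi) ∨ (lo < p (j+1) ∧ p (j+1) < hi)) →
        (lo ≤ p j ∧ p j ≤ hi ∧ lo ≤ p (j+1) ∧ p (j+1) ≤ hi) := by
      intro j hj
      by_contra hcon
      apply hcr j istar
      have h1 : min (p istar) (p (istar+1)) = lo := hlo.symm
      have h2 : max (p istar) (p (istar+1)) = hi := hhi.symm
      unfold Icross
      omega
    have Lnocut : ∀ j, Cut j → ¬(lo < p j ∧ p j < hi) ∧ ¬(lo < p (j+1) ∧ p (j+1) < hi) := by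
      intro j hj
      have hL := L1 j hj
      have hcut := hj
      simp only [hCutdef] at hcut
      constructor <;> intro hin
      · have hLe := Ledge j (Or.inl hin)
        omega
      · have hLe := Ledge j (Or.inr hin)
        omega
    rcases Nat.lt_or_ge (lo+1) hi with hBig | hSmall
    swap
    · -- hi = lo + 1 : the two consecutive positions are exactly the wall edge
      have hlo_t : lo = t ∧ hi = t+1 := by omega
      have hd : (p istar = t ∧ p (istar+1) = t+1) ∨ (p istar = t+1 ∧ p (istar+1) = t) := by
        rcases le_total (p istar) (p (istar+1)) with h | h
        · left; rw [hlo, hhi] at hlo_t; omega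
        · right; rw [hlo, hhi] at hlo_t; omega
      rcases hd with ⟨h1, h2⟩ | ⟨h1, h2⟩
      · left
        rw [← hfeq (by omega) h1, ← hfeq ht h2]
      · right
        rw [← hfeq (by omega) h2, ← hfeq ht h1, add_sub_cancel_right]
    -- Big case
    set SI : ZMod n → Prop := fun j => lo < p j ∧ p j < hi with hSIdef
    have histar_vals : (p istar = lo ∨ p istar = hi) ∧ (p (istar+1) = lo ∨ p (istar+1) = hi) := by
      rw [hlo, hhi]; omega
    have hval_ne : ∀ j, SI j → j ≠ istar ∧ j ≠ istar + 1 := by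
      intro j hj
      simp only [hSIdef] at hj
      constructor <;> intro e <;> rw [e] at hj <;> omega
    have hSIiff : ∀ j, (lo < p j ∧ p j < hi) ↔ SI j := by intro j; simp only [hSIdef]
    have hend : ∀ j : ZMod n, p j = lo ∨ p j = hi → j = istar ∨ j = istar + 1 := by
      intro j hj
      have h1 : p j = p istar ∨ p j = p (istar+1) := by rw [hlo, hhi] at hj; omega
      rcases h1 with h | h
      · exact Or.inl (hinj h)
      · exact Or.inr (hinj h)
    have st1 : ∀ j, SI j → j + 1 ≠ istar → j + 1 ≠ istar + 1 → SI (j+1) := by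
      intro j hj hne1 hne2
      have hL := Ledge j (Or.inl ((hSIiff j).2 hj))
      simp only [hSIdef] at hj ⊢
      have h1 : ¬ (p (j+1) = lo ∨ p (j+1) = hi) := by
        intro h
        rcases hend _ h with h' | h'
        · exact hne1 h'
        · exact hne2 h'
      omega
    have st2 : ∀ j, SI j → j - 1 ≠ istar → j - 1 ≠ istar + 1 → SI (j-1) := by
      intro j hj hne1 hne2
      have e : (j - 1) + 1 = j := sub_add_cancel j 1
      have hL := Ledge (j-1) (Or.inr (by rw [e]; exact (hSIiff j).2 hj))
      rw [e] at hL
      simp only [hSIdef] at hj ⊢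
      have h1 : ¬ (p (j-1) = lo ∨ p (j-1) = hi) := by
        intro h
        rcases hend _ h with h' | h'
        · exact hne1 h'
        · exact hne2 h'
      omega
    have hz1 : SI (f (lo+1)) := by
      simp only [hSIdef]; rw [hfval (lo+1) (by omega)]; omega
    have hz1ne := hval_ne _ hz1
    have hSIall : ∀ j : ZMod n, j ≠ istar → j ≠ istar + 1 → SI j := by
      have key : ∀ s : ℕ, 2 ≤ s → s ≤ n-1 → SI (istar + (s : ZMod n)) := by
        set s₀ := (f (lo+1) - istar).val with hs₀
        have hz1e : istar + (s₀ : ZMod n) = f (lo+1) := by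
          rw [hs₀, cast_val, add_comm, sub_add_cancel]
        have hs₀ne0 : s₀ ≠ 0 := by
          intro e
          apply hz1ne.1
          rw [← hz1e, e, Nat.cast_zero, add_zero]
        have hs₀ne1 : s₀ ≠ 1 := by
          intro e
          apply hz1ne.2
          rw [← hz1e, e, Nat.cast_one]
        have hs₀lt : s₀ ≤ n - 1 := by have := ZMod.val_lt (f (lo+1) - istar); omega
        refine propagate (P := fun s => SI (istar + (s : ZMod n))) (a := 2) (b := n-1)
          (s0 := s₀) (by omega) hs₀lt
          (by show SI (istar + (s₀ : ZMod n)); rw [hz1e]; exact hz1) ?_ ?_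
        · intro s hs1 hs2 hP
          have e : istar + ((s+1 : ℕ) : ZMod n) = (istar + (s : ZMod n)) + 1 := by
            push_cast; ring
          rw [e]
          refine st1 _ hP ?_ ?_ <;> rw [← e] <;> intro h
          · rw [add_eq_left] at h
            have h3 := natc_inj (show s+1 < n by omega) hnpos
              (show ((s+1 : ℕ) : ZMod n) = ((0:ℕ) : ZMod n) by rw [h, Nat.cast_zero])
            omega
          · rw [add_right_inj] at h
            have h3 := natc_inj (show s+1 < n by omega) (show 1 < n by omega)
              (show ((s+1 : ℕ) : ZMod n) = ((1:ℕ) : ZMod n) by rw [h, Nat.cast_one])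
            omega
        · intro s hs1 hs2 hP
          have e : istar + ((s-1 : ℕ) : ZMod n) = (istar + (s : ZMod n)) - 1 := by
            rw [Nat.cast_sub (by omega : 1 ≤ s), Nat.cast_one]; ring
          rw [e]
          refine st2 _ hP ?_ ?_ <;> rw [← e] <;> intro h
          · rw [add_eq_left] at h
            have h3 := natc_inj (show s-1 < n by omega) hnpos
              (show ((s-1 : ℕ) : ZMod n) = ((0:ℕ) : ZMod n) by rw [h, Nat.cast_zero])
            omega
          · rw [add_right_inj] at h
            have h3 := natc_inj (show s-1 < n by omega) (show 1 < n by omega)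
              (show ((s-1 : ℕ) : ZMod n) = ((1:ℕ) : ZMod n) by rw [h, Nat.cast_one])
            omega
      intro j h1 h2
      set s := (j - istar).val with hs
      have he : istar + (s : ZMod n) = j := by
        rw [hs, cast_val, add_comm, sub_add_cancel]
      have hs0 : s ≠ 0 := by
        intro e; apply h1; rw [← he, e, Nat.cast_zero, add_zero]
      have hs1 : s ≠ 1 := by
        intro e; apply h2; rw [← he, e, Nat.cast_one]
      have hslt : s ≤ n - 1 := by have := ZMod.val_lt (j - istar); omega
      have := key s (by omega) hslt
      rwa [he] at this
    have hlo0 : lo = 0 := by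
      by_contra h
      have h0 : p (f 0) = 0 := hfval 0 (by omega)
      have hne1 : f 0 ≠ istar := by
        intro e; rw [e] at h0; rcases histar_vals.1 with h' | h' <;> omega
      have hne2 : f 0 ≠ istar + 1 := by
        intro e; rw [e] at h0; rcases histar_vals.2 with h' | h' <;> omega
      have := hSIall _ hne1 hne2
      simp only [hSIdef] at this; omega
    have hhiN : hi = n - 1 := by
      by_contra h
      have h0 : p (f (n-1)) = n-1 := hfval (n-1) (by omega)
      have hne1 : f (n-1) ≠ istar := by
        intro e; rw [e] at h0; rcases histar_vals.1 with h' | h' <;> omega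
      have hne2 : f (n-1) ≠ istar + 1 := by
        intro e; rw [e] at h0; rcases histar_vals.2 with h' | h' <;> omega
      have := hSIall _ hne1 hne2
      simp only [hSIdef] at this; omega
    have hd : (p istar = 0 ∧ p (istar+1) = n-1) ∨ (p (istar+1) = 0 ∧ p istar = n-1) := by
      rw [hlo] at hlo0; rw [hhi] at hhiN
      rcases le_total (p istar) (p (istar+1)) with h | h
      · left; omega
      · right; omega
    have final : ∀ (i0 e : ZMod n), (e = 1 ∨ e = -1) → p i0 = 0 → p (i0 + e) = n - 1 →
        (f (t+1) = f t + 1 ∨ f (t+1) = f t - 1) := by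
      intro i0 e he hp0 hp1
      have hcast_e : ∀ s : ℕ, ((s : ZMod n) = e ∧ 1 ≤ s ∧ s ≤ n-1) →
          i0 + (s : ZMod n) = i0 + e := by
        intro s hs; rw [hs.1]
      -- t = 0
      have hT : t = 0 := by
        by_contra hT0
        have ht1 : 1 ≤ t := by omega
        set Tp : ZMod n → Prop := fun j => 1 ≤ p j ∧ p j ≤ t with hTpdef
        have tstep1 : ∀ j, Tp j → j + 1 ≠ i0 → Tp (j+1) := by
          intro j hj hne
          simp only [hTpdef] at hj ⊢
          have hle : p (j+1) ≤ t := by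
            by_contra hgt
            have hcut : Cut j := by simp only [hCutdef]; omega
            have := (L1 j hcut).1
            omega
          refine ⟨?_, hle⟩
          by_contra h0
          exact hne (hinj (show p (j+1) = p i0 by omega))
        have tstep2 : ∀ j, Tp j → j - 1 ≠ i0 → Tp (j-1) := by
          intro j hj hne
          have e2 : (j - 1) + 1 = j := sub_add_cancel j 1
          simp only [hTpdef] at hj ⊢
          have hle : p (j-1) ≤ t := by
            by_contra hgt
            have hcut : Cut (j-1) := by simp only [hCutdef]; rw [e2]; omega
            have := (L1 _ hcut).1
            rw [e2] at this
            omega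
          refine ⟨?_, hle⟩
          by_contra h0
          exact hne (hinj (show p (j-1) = p i0 by omega))
        -- seed
        have hseed : Tp (f 1) := by
          simp only [hTpdef]; rw [hfval 1 (by omega)]; omega
        have hsne : f 1 ≠ i0 := by
          intro h
          have := hfval 1 (by omega)
          rw [h, hp0] at this; omega
        set s1 := (f 1 - i0).val with hs1
        have hse : i0 + (s1 : ZMod n) = f 1 := by
          rw [hs1, cast_val, add_comm, sub_add_cancel]
        have hs1ne0 : s1 ≠ 0 := by
          intro h; apply hsne; rw [← hse, h, Nat.cast_zero, add_zero]
        have hs1lt : s1 ≤ n - 1 := by have := ZMod.val_lt (f 1 - i0); omega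
        have hTall : ∀ s : ℕ, 1 ≤ s → s ≤ n-1 → Tp (i0 + (s : ZMod n)) := by
          refine propagate (P := fun s => Tp (i0 + (s : ZMod n))) (a := 1) (b := n-1)
            (s0 := s1) (by omega) hs1lt
            (by show Tp (i0 + (s1 : ZMod n)); rw [hse]; exact hseed) ?_ ?_
          · intro s hsa hsb hP
            have e2 : i0 + ((s+1 : ℕ) : ZMod n) = (i0 + (s : ZMod n)) + 1 := by
              push_cast; ring
            rw [e2]
            refine tstep1 _ hP ?_
            rw [← e2]; intro h
            rw [add_eq_left] at h
            have h3 := natc_inj (show s+1 < n by omega) hnpos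
              (show ((s+1 : ℕ) : ZMod n) = ((0:ℕ) : ZMod n) by rw [h, Nat.cast_zero])
            omega
          · intro s hsa hsb hP
            have e2 : i0 + ((s-1 : ℕ) : ZMod n) = (i0 + (s : ZMod n)) - 1 := by
              rw [Nat.cast_sub (by omega : 1 ≤ s), Nat.cast_one]; ring
            rw [e2]
            refine tstep2 _ hP ?_
            rw [← e2]; intro h
            rw [add_eq_left] at h
            have h3 := natc_inj (show s-1 < n by omega) hnpos
              (show ((s-1 : ℕ) : ZMod n) = ((0:ℕ) : ZMod n) by rw [h, Nat.cast_zero])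
            omega
        -- i0 + e is in the chain
        have hcon : Tp (i0 + e) := by
          rcases he with he | he
          · have := hTall 1 le_rfl (by omega)
            rwa [Nat.cast_one, ← he] at this
          · have := hTall (n-1) (by omega) le_rfl
            rwa [castn1 (by omega), ← he] at this
        simp only [hTpdef] at hcon
        rw [hp1] at hcon
        omega
      -- now t = 0
      have hf0 : f 0 = i0 := (hfeq (by omega) hp0).symm
      set g := i0 - e with hgdef
      have he1 : (1 : ZMod n) ≠ 0 := by
        have := natc_ne_zero (n := n) (a := 1) (by omega) (by omega)
        simpa using this
      have he2 : (2 : ZMod n) ≠ 0 := by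
        have := natc_ne_zero (n := n) (a := 2) (by omega) (by omega)
        simpa using this
      have hgne : g ≠ i0 := by
        intro h
        rw [hgdef, sub_eq_self] at h
        rcases he with he | he
        · exact he1 (he ▸ h)
        · rw [he, neg_eq_zero] at h
          exact he1 h
      have hgne1 : g ≠ i0 + e := by
        intro h
        rw [hgdef] at h
        have h3 : i0 - e - (i0 + e) = 0 := by rw [h]; ring
        have h2 : e + e = 0 := by
          have h4 : -(e+e) = 0 := by rw [← h3]; ring
          rwa [neg_eq_zero] at h4
        rcases he with he | he
        · rw [he] at h2
          apply he2; rw [show (2:ZMod n) = 1 + 1 by ring, h2]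
        · rw [he] at h2
          apply he2
          rw [show (2:ZMod n) = -(-1 + -1) by ring, h2, neg_zero]
      set q2 := p g with hq2def
      have hq2ne0 : q2 ≠ 0 := by
        intro h; exact hgne (hinj (show p g = p i0 by rw [← hq2def] at *; omega))
      have hq2neN : q2 ≠ n-1 := by
        intro h; exact hgne1 (hinj (show p g = p (i0+e) by rw [← hq2def] at *; omega))
      by_cases hq21 : q2 = 1
      · -- f 1 = g, conclude
        have hf1 : f 1 = g := by
          refine (hfeq (by omega) ?_).symm
          rw [← hq2def]; exact hq21
        rw [hT, hf0, hf1, hgdef]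
        rcases he with he | he
        · right; rw [he]
        · left; rw [he, sub_neg_eq_add]
      · exfalso
        have hq2lt : q2 < n := by rw [hq2def]; exact hlt g
        have hq2ge2 : 2 ≤ q2 := by omega
        have hq2len2 : q2 ≤ n - 2 := by omega
        -- the wall-2 cycle edge {i0, g}
        have hwall2 : ∃ j2 : ZMod n, (p j2 = 0 ∧ p (j2+1) = q2) ∨ (p j2 = q2 ∧ p (j2+1) = 0) := by
          rcases he with he | he
          · refine ⟨g, Or.inr ⟨hq2def.symm, ?_⟩⟩
            rw [show g + 1 = i0 by rw [hgdef, he]; ring]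
            exact hp0
          · refine ⟨i0, Or.inl ⟨hp0, ?_⟩⟩
            rw [show i0 + 1 = g by rw [hgdef, he]; ring]
        obtain ⟨j2, hj2⟩ := hwall2
        set Jp : ZMod n → Prop := fun j => 1 ≤ p j ∧ p j ≤ q2 - 1 with hJpdef
        have hnbr0 : ∀ j : ZMod n, Jp j → j + 1 = i0 ∨ j - 1 = i0 → False := by
          intro j hj hor
          simp only [hJpdef] at hj
          have hj' : j = i0 - 1 ∨ j = i0 + 1 := by
            rcases hor with h | h
            · left; rw [← h]; ring
            · right; rw [← h]; ring
          have hj'' : j = i0 + e ∨ j = g := by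
            rcases he with he | he <;> rcases hj' with h | h
            · right; rw [hgdef, he]; exact h
            · left; rw [he]; exact h
            · left; rw [he, ← sub_eq_add_neg]; exact h
            · right; rw [hgdef, he, sub_neg_eq_add]; exact h
          rcases hj'' with h | h
          · rw [h, hp1] at hj; omega
          · rw [h, ← hq2def] at hj; omega
        have jstep1 : ∀ j, Jp j → j + 1 ≠ g → Jp (j+1) := by
          intro j hj hne
          have hj0 := hj
          simp only [hJpdef] at hj ⊢
          have h0 : p (j+1) ≠ 0 := by
            intro h0
            exact hnbr0 j hj0 (Or.inl (hinj (show p (j+1) = p i0 by omega)))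
          have hle : p (j+1) ≤ q2 := by
            by_contra hgt
            apply hcr j j2
            unfold Icross
            rcases hj2 with ⟨a, b⟩ | ⟨a, b⟩ <;> omega
          have hne2 : p (j+1) ≠ q2 := by
            intro h
            exact hne (hinj (show p (j+1) = p g by rw [← hq2def]; omega))
          omega
        have jstep2 : ∀ j, Jp j → j - 1 ≠ g → Jp (j-1) := by
          intro j hj hne
          have e2 : (j - 1) + 1 = j := sub_add_cancel j 1
          have hj0 := hj
          simp only [hJpdef] at hj ⊢
          have h0 : p (j-1) ≠ 0 := by
            intro h0
            exact hnbr0 j hj0 (Or.inr (hinj (show p (j-1) = p i0 by omega)))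
          have hle : p (j-1) ≤ q2 := by
            by_contra hgt
            apply hcr (j-1) j2
            unfold Icross
            rw [e2]
            rcases hj2 with ⟨a, b⟩ | ⟨a, b⟩ <;> omega
          have hne2 : p (j-1) ≠ q2 := by
            intro h
            exact hne (hinj (show p (j-1) = p g by rw [← hq2def]; omega))
          omega
        -- seed
        have hseed : Jp (f 1) := by
          simp only [hJpdef]; rw [hfval 1 (by omega)]; omega
        have hsne : f 1 ≠ g := by
          intro h
          apply hq21
          rw [hq2def, ← h, hfval 1 (by omega)]
        set s1 := (f 1 - g).val with hs1
        have hse : g + (s1 : ZMod n) = f 1 := by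
          rw [hs1, cast_val, add_comm, sub_add_cancel]
        have hs1ne0 : s1 ≠ 0 := by
          intro h; apply hsne; rw [← hse, h, Nat.cast_zero, add_zero]
        have hs1lt : s1 ≤ n - 1 := by have := ZMod.val_lt (f 1 - g); omega
        have hJall : ∀ s : ℕ, 1 ≤ s → s ≤ n-1 → Jp (g + (s : ZMod n)) := by
          refine propagate (P := fun s => Jp (g + (s : ZMod n))) (a := 1) (b := n-1)
            (s0 := s1) (by omega) hs1lt
            (by show Jp (g + (s1 : ZMod n)); rw [hse]; exact hseed) ?_ ?_
          · intro s hsa hsb hP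
            have e2 : g + ((s+1 : ℕ) : ZMod n) = (g + (s : ZMod n)) + 1 := by
              push_cast; ring
            rw [e2]
            refine jstep1 _ hP ?_
            rw [← e2]; intro h
            rw [add_eq_left] at h
            have h3 := natc_inj (show s+1 < n by omega) hnpos
              (show ((s+1 : ℕ) : ZMod n) = ((0:ℕ) : ZMod n) by rw [h, Nat.cast_zero])
            omega
          · intro s hsa hsb hP
            have e2 : g + ((s-1 : ℕ) : ZMod n) = (g + (s : ZMod n)) - 1 := by
              rw [Nat.cast_sub (by omega : 1 ≤ s), Nat.cast_one]; ring
            rw [e2]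
            refine jstep2 _ hP ?_
            rw [← e2]; intro h
            rw [add_eq_left] at h
            have h3 := natc_inj (show s-1 < n by omega) hnpos
              (show ((s-1 : ℕ) : ZMod n) = ((0:ℕ) : ZMod n) by rw [h, Nat.cast_zero])
            omega
        -- i0 = g + e, within the chain: contradiction
        have hi0g : i0 = g + e := by rw [hgdef]; ring
        have hcon : Jp i0 := by
          rcases he with he | he
          · have := hJall 1 le_rfl (by omega)
            rwa [Nat.cast_one, ← he, ← hi0g] at this
          · have := hJall (n-1) (by omega) le_rfl
            rwa [castn1 (by omega), ← he, ← hi0g] at this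
        simp only [hJpdef] at hcon
        rw [hp0] at hcon
        omega
    rcases hd with ⟨h1, h2⟩ | ⟨h1, h2⟩
    · exact final istar 1 (Or.inl rfl) h1 h2
    · refine final (istar+1) (-1) (Or.inr rfl) h1 ?_
      rw [show istar + 1 + (-1) = istar from by ring]
      exact h2
  -- assemble: constant direction
  have main2 : ∀ ε : ZMod n, (ε = 1 ∨ ε = -1) → f 1 = f 0 + ε →
      (∃ i₀ : ZMod n, (∀ s : ℕ, s < n → p (i₀ + (s : ZMod n)) = s) ∨
        (∀ s : ℕ, s < n → p (i₀ - (s : ZMod n)) = s)) := by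
    intro ε hε hbase
    have hfne : ∀ (t1 t2 : ℕ), t1 < n → t2 < n → f t1 = f t2 → t1 = t2 := by
      intro t1 t2 h1 h2 h
      have e1 := hfval t1 h1
      have e2 := hfval t2 h2
      rw [h, e2] at e1
      omega
    have hstep : ∀ t : ℕ, t + 1 < n → f (t+1) = f t + ε := by
      intro t
      induction t with
      | zero => intro _; exact hbase
      | succ t ih =>
        intro ht
        have ih' := ih (by omega)
        rcases Astep (t+1) ht with h | h
        · rcases hε with he | he
          · rw [h, ih', he]
          · exfalso
            rw [ih', he] at h
            have h2 : f (t+1+1) = f t := by rw [h]; ring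
            have := hfne _ _ (by omega) (by omega) h2
            omega
        · rcases hε with he | he
          · exfalso
            rw [ih', he] at h
            have h2 : f (t+1+1) = f t := by rw [h]; ring
            have := hfne _ _ (by omega) (by omega) h2
            omega
          · rw [h, ih', he]; ring
    have hform : ∀ s : ℕ, s < n → f s = f 0 + (s : ZMod n) * ε := by
      intro s
      induction s with
      | zero => intro _; simp
      | succ s ih =>
        intro hs
        rw [hstep s hs, ih (by omega)]
        push_cast
        ring
    refine ⟨f 0, ?_⟩
    rcases hε with he | he
    · left
      intro s hs
      have e : f 0 + (s : ZMod n) = f s := by rw [hform s hs, he, mul_one]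
      rw [e]
      exact hfval s hs
    · right
      intro s hs
      have e : f 0 - (s : ZMod n) = f s := by
        rw [hform s hs, he, mul_neg_one, sub_eq_add_neg]
      rw [e]
      exact hfval s hs
  rcases Astep 0 (by omega) with h | h
  · exact main2 1 (Or.inl rfl) h
  · exact main2 (-1) (Or.inr rfl) (by rw [h, sub_eq_add_neg])

theorem key_cross {n : ℕ} [NeZero n] (hn : 6 ≤ n) (p : ZMod n → ℕ)
    (hlt : ∀ i, p i < n) (hinj : Function.Injective p)
    (hcr : ∀ i j : ZMod n, ¬ Icross (p i) (p (i+1)) (p j) (p (j+1)))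
    (k : ZMod n) (m : ℕ) (hm2 : 2 ≤ m) (hmn : m ≤ n - 2) :
    Icross (p k) (p (k + 2)) (p (k + 1)) (p (k + 1 + (m : ZMod n))) := by
  obtain ⟨i0, hP | hP⟩ := classify (by omega) p hlt hinj hcr
  · -- increasing direction
    set d := (k - i0).val with hd
    have hdi : i0 + (d : ZMod n) = k := by rw [hd, cast_val, add_comm, sub_add_cancel]
    have hform : ∀ c : ℕ, p (k + (c : ZMod n)) = (d + c) % n := by
      intro c
      have e : i0 + (((d + c) % n : ℕ) : ZMod n) = k + (c : ZMod n) := by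
        have e2 : (((d + c) % n : ℕ) : ZMod n) = ((d + c : ℕ) : ZMod n) := ZMod.natCast_mod _ n
        rw [e2, Nat.cast_add, ← add_assoc, hdi]
      rw [← e, hP _ (Nat.mod_lt _ (by omega))]
    have hd_lt : d < n := ZMod.val_lt _
    have e0 : p k = (d + 0) % n := by
      have := hform 0; rwa [Nat.cast_zero, add_zero] at this
    have e1 : p (k+1) = (d + 1) % n := by
      have := hform 1; rwa [Nat.cast_one] at this
    have e2 : p (k+2) = (d + 2) % n := by
      have := hform 2; rwa [Nat.cast_two] at this
    have e3 : p (k+1+(m : ZMod n)) = (d + (m+1)) % n := by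
      have := hform (m+1)
      rwa [show k + ((m+1 : ℕ) : ZMod n) = k + 1 + (m : ZMod n) by push_cast; ring] at this
    rw [e0, e1, e2, e3]
    exact gen_icross hd_lt (by omega) (by omega) (by omega) (by omega)
  · -- decreasing direction
    set d := (i0 - k).val with hd
    have hdi : i0 - (d : ZMod n) = k := by rw [hd, cast_val, sub_sub_cancel]
    have hform : ∀ c : ℕ, c ≤ n → p (k + (c : ZMod n)) = (d + (n - c)) % n := by
      intro c hc
      have e : i0 - (((d + (n - c)) % n : ℕ) : ZMod n) = k + (c : ZMod n) := by
        have e2 : (((d + (n-c)) % n : ℕ) : ZMod n) = ((d + (n-c) : ℕ) : ZMod n) :=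
          ZMod.natCast_mod _ n
        rw [e2, Nat.cast_add, cast_n_sub hc]
        rw [show i0 - ((d : ZMod n) + -(c : ZMod n)) = (i0 - (d : ZMod n)) + (c : ZMod n)
          by ring, hdi]
      rw [← e, hP _ (Nat.mod_lt _ (by omega))]
    have hd_lt : d < n := ZMod.val_lt _
    have e0 : p k = (d + 0) % n := by
      have := hform 0 (by omega)
      rw [Nat.cast_zero, add_zero] at this
      rw [this, Nat.sub_zero, Nat.add_mod_right, Nat.add_zero]
    have e1 : p (k+1) = (d + (n-1)) % n := by
      have := hform 1 (by omega); rwa [Nat.cast_one] at this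
    have e2 : p (k+2) = (d + (n-2)) % n := by
      have := hform 2 (by omega); rwa [Nat.cast_two] at this
    have e3 : p (k+1+(m : ZMod n)) = (d + (n-(m+1))) % n := by
      have := hform (m+1) (by omega)
      rwa [show k + ((m+1 : ℕ) : ZMod n) = k + 1 + (m : ZMod n) by push_cast; ring] at this
    rw [e0, e1, e2, e3]
    exact icross_swap (gen_icross hd_lt (by omega) (by omega) (by omega) (by omega))

end DoubleStarAux

open DoubleStarAux

theorem stmt3 {V : Type*} [Fintype V] [DecidableEq V] (G : SimpleGraph V) [DecidableRel G.Adj]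
    (n : ℕ) (hn : 6 ≤ n) (hcard : Fintype.card V = n)
    (v : ZMod n → V) (hbij : Function.Bijective v)
    (hcyc : ∀ i : ZMod n, G.Adj (v i) (v (i + 1)))
    (hop : IsOuterplanar G) (hfree : ¬ ContainsDoubleStar G 2 2)
    (hdeg : ∀ w : V, G.degree w ≤ 3) :
    (∀ i : ZMod n, ¬ (G.degree (v i) = 3 ∧ G.degree (v (i + 1)) = 3)) ∧
      (Finset.univ.filter fun w : V => G.degree w = 3).card ≤ n / 2 := by
  classical
  haveI : NeZero n := ⟨by omega⟩
  obtain ⟨σ, hσb, hσcr⟩ := hop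
  have hNV : Nat.card V = n := by rw [Nat.card_eq_fintype_card, hcard]
  have hqlt : ∀ x : V, (σ x).val < n := fun x => by rw [← hNV]; exact (σ x).isLt
  have hqinj : ∀ x y : V, (σ x).val = (σ y).val → x = y := fun x y h =>
    hσb.1 (Fin.ext h)
  -- no interleaving for any pair of edges
  have H4 : ∀ a b c d : V, G.Adj a b → G.Adj c d →
      ¬ Icross (σ a).val (σ b).val (σ c).val (σ d).val := by
    intro a b c d hab hcd hI
    unfold Icross at hI
    rcases hI with ⟨h1, h2, h3⟩ | ⟨h1, h2, h3⟩ <;>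
      rcases le_total (σ a).val (σ b).val with hab' | hab' <;>
      rcases le_total (σ c).val (σ d).val with hcd' | hcd' <;>
      simp only [min_eq_left, min_eq_right, max_eq_left, max_eq_right, hab', hcd',
        inf_eq_left.2, sup_eq_right.2, min_eq_left hab', min_eq_right hab',
        max_eq_left hab', max_eq_right hab', min_eq_left hcd', min_eq_right hcd',
        max_eq_left hcd', max_eq_right hcd'] at h1 h2 h3
    · exact hσcr a b c d hab hcd ⟨h1, h2, h3⟩
    · exact hσcr a b d c hab hcd.symm ⟨h1, h2, h3⟩
    · exact hσcr b a c d hab.symm hcd ⟨h1, h2, h3⟩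
    · exact hσcr b a d c hab.symm hcd.symm ⟨h1, h2, h3⟩
    · exact hσcr c d a b hcd hab ⟨h1, h2, h3⟩
    · exact hσcr d c a b hcd.symm hab ⟨h1, h2, h3⟩
    · exact hσcr c d b a hcd hab.symm ⟨h1, h2, h3⟩
    · exact hσcr d c b a hcd.symm hab.symm ⟨h1, h2, h3⟩
  have hplt : ∀ i : ZMod n, (fun i : ZMod n => (σ (v i)).val) i < n := fun i => hqlt _
  have hpinj : Function.Injective (fun i : ZMod n => (σ (v i)).val) := fun i j h =>
    hbij.1 (hqinj _ _ h)
  have hpcr : ∀ i j : ZMod n,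
      ¬ Icross ((σ (v i)).val) ((σ (v (i+1))).val) ((σ (v j)).val) ((σ (v (j+1))).val) :=
    fun i j => H4 _ _ _ _ (hcyc i) (hcyc j)
  have keyG : ∀ (k : ZMod n) (m : ℕ), 2 ≤ m → m ≤ n - 2 →
      G.Adj (v k) (v (k+2)) → G.Adj (v (k+1)) (v (k+1+(m : ZMod n))) → False := by
    intro k m h2 hn2 hchord hedge
    exact H4 _ _ _ _ hchord hedge
      (key_cross hn (fun i : ZMod n => (σ (v i)).val) hplt hpinj hpcr k m h2 hn2)
  -- index helpers
  have hvinj : ∀ {i j : ZMod n}, v i = v j → i = j := fun h => hbij.1 h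
  have hzne : ∀ c : ℕ, 0 < c → c < n → ((c : ZMod n) ≠ 0) := fun c h1 h2 => natc_ne_zero h1 h2
  -- third neighbor extraction
  have hthird : ∀ j : ZMod n, G.degree (v j) = 3 →
      ∃ μ : ZMod n, G.Adj (v j) (v (j + μ)) ∧ 2 ≤ μ.val ∧ μ.val ≤ n - 2 := by
    intro j h3
    have hsub : ¬ (G.neighborFinset (v j) ⊆ {v (j-1), v (j+1)}) := by
      intro hs
      have h1 := Finset.card_le_card hs
      have h2 : ({v (j-1), v (j+1)} : Finset V).card ≤ 2 :=
        (Finset.card_insert_le _ _).trans (by simp)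
      rw [SimpleGraph.card_neighborFinset_eq_degree, h3] at h1
      omega
    obtain ⟨a, haN, hane⟩ := Finset.not_subset.1 hsub
    have hadj : G.Adj (v j) a := by rwa [SimpleGraph.mem_neighborFinset] at haN
    obtain ⟨ja, rfl⟩ := hbij.2 a
    simp only [Finset.mem_insert, Finset.mem_singleton] at hane
    push_neg at hane
    refine ⟨ja - j, ?_, ?_⟩
    · rwa [show j + (ja - j) = ja by ring]
    · have h0 : ja - j ≠ 0 := by
        intro h
        have : ja = j := by
          have := congrArg (fun x => x + j) h
          simpa [sub_add_cancel] using this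
        rw [this] at hadj
        exact G.irrefl hadj
      have h1 : ja - j ≠ 1 := by
        intro h
        apply hane.2
        congr 1
        have := congrArg (fun x => x + j) h
        simp only [sub_add_cancel] at this
        rw [this]; ring
      have hm1 : ja - j ≠ -1 := by
        intro h
        apply hane.1
        congr 1
        have := congrArg (fun x => x + j) h
        simp only [sub_add_cancel] at this
        rw [this]; ring
      have hv0 : (ja - j).val ≠ 0 := fun h => h0 ((ZMod.val_eq_zero _).1 h)
      have hv1 : (ja - j).val ≠ 1 := by
        intro h
        exact h1 (by rw [← cast_val (ja - j), h, Nat.cast_one])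
      have hvn1 : (ja - j).val ≠ n - 1 := by
        intro h
        exact hm1 (by rw [← cast_val (ja - j), h, castn1 (by omega)])
      have := ZMod.val_lt (ja - j)
      omega
  have part1 : ∀ i : ZMod n, ¬ (G.degree (v i) = 3 ∧ G.degree (v (i + 1)) = 3) := by
    rintro i ⟨h3a, h3b⟩
    obtain ⟨μa, hadja, hva2, hvan⟩ := hthird i h3a
    obtain ⟨μb, hadjb, hvb2, hvbn⟩ := hthird (i+1) h3b
    have hμa : ((μa.val : ℕ) : ZMod n) = μa := cast_val μa
    have hμb : ((μb.val : ℕ) : ZMod n) = μb := cast_val μb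
    by_cases hca : μa.val = 2
    · have h2 : μa = 2 := by rw [← hμa, hca, Nat.cast_two]
      apply keyG i μb.val hvb2 hvbn
      · rwa [h2] at hadja
      · rwa [← hμb] at hadjb
    by_cases hcb : μb.val = n - 2
    · have h2 : μb = -2 := by rw [← hμb, hcb, cast_n_sub (by omega), Nat.cast_two]
      apply keyG (i-1) μa.val hva2 hvan
      · rw [show i - 1 + 2 = i + 1 by ring]
        rw [h2] at hadjb
        rw [show i + 1 + (-2 : ZMod n) = i - 1 by ring] at hadjb
        exact hadjb.symm
      · rw [show i - 1 + 1 = i by ring]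
        rwa [← hμa] at hadja
    · -- main case: build the double star
      have hμval : ∀ (μ : ZMod n) (c : ℕ), c < n → μ = (c : ZMod n) → μ.val = c := by
        intro μ c hc h
        rw [h, ZMod.val_natCast, Nat.mod_eq_of_lt hc]
      -- index distinctness facts
      have dA1 : v (i + μa) ≠ v (i - 1) := by
        intro h
        have h3 := hvinj h
        have h4 : μa = ((n-1 : ℕ) : ZMod n) := by
          rw [castn1 (by omega)]
          linear_combination h3
        have := hμval _ _ (by omega) h4
        omega
      have dA2 : v (i + μa) ≠ v (i + 2) := by
        intro h
        have h3 := hvinj h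
        have h4 : μa = ((2 : ℕ) : ZMod n) := by
          rw [Nat.cast_two]
          linear_combination h3
        have := hμval _ _ (by omega) h4
        omega
      have dA3 : v (i + μa) ≠ v (i + 1) := by
        intro h
        have h3 := hvinj h
        have h4 : μa = ((1 : ℕ) : ZMod n) := by
          rw [Nat.cast_one]
          linear_combination h3
        have := hμval _ _ (by omega) h4
        omega
      have dA4 : v (i + μa) ≠ v (i) := by
        intro h
        have h3 := hvinj h
        have h4 : μa = ((0 : ℕ) : ZMod n) := by
          rw [Nat.cast_zero]
          linear_combination h3
        have := hμval _ _ (by omega) h4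
        omega
      have dB1 : v (i + 1 + μb) ≠ v (i + 2) := by
        intro h
        have h3 := hvinj h
        have h4 : μb = ((1 : ℕ) : ZMod n) := by
          rw [Nat.cast_one]
          linear_combination h3
        have := hμval _ _ (by omega) h4
        omega
      have dB2 : v (i + 1 + μb) ≠ v (i - 1) := by
        intro h
        have h3 := hvinj h
        have h4 : μb = ((n-2 : ℕ) : ZMod n) := by
          rw [cast_n_sub (by omega), Nat.cast_two]
          linear_combination h3
        have := hμval _ _ (by omega) h4
        omega
      have dB3 : v (i + 1 + μb) ≠ v (i) := by
        intro h
        have h3 := hvinj h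
        have h4 : μb = ((n-1 : ℕ) : ZMod n) := by
          rw [castn1 (by omega)]
          linear_combination h3
        have := hμval _ _ (by omega) h4
        omega
      have dB4 : v (i + 1 + μb) ≠ v (i + 1) := by
        intro h
        have h3 := hvinj h
        have h4 : μb = ((0 : ℕ) : ZMod n) := by
          rw [Nat.cast_zero]
          linear_combination h3
        have := hμval _ _ (by omega) h4
        omega
      have dC : ∀ (x : ZMod n) (c : ℕ), 0 < c → c < n → v (x + (c : ZMod n)) ≠ v x := by
        intro x c h1 h2 h
        have h3 := hvinj h
        rw [add_eq_left] at h3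
        exact hzne c h1 h2 h3
      have dC1 : v (i + 1) ≠ v (i - 1) := by
        have := dC (i-1) 2 (by omega) (by omega)
        rwa [show i - 1 + ((2:ℕ) : ZMod n) = i + 1 from by push_cast; ring] at this
      have dC2 : v (i + 2) ≠ v (i - 1) := by
        have := dC (i-1) 3 (by omega) (by omega)
        rwa [show i - 1 + ((3:ℕ) : ZMod n) = i + 2 from by push_cast; ring] at this
      have dC3 : v (i + 2) ≠ v i := by
        have := dC i 2 (by omega) (by omega)
        rwa [show i + ((2:ℕ) : ZMod n) = i + 2 from by push_cast; ring] at this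
      have dC0 : v (i + 1) ≠ v i := by
        have := dC i 1 (by omega) (by omega)
        rwa [show i + ((1:ℕ) : ZMod n) = i + 1 from by push_cast; ring] at this
      -- a = b is impossible (degree would be 4)
      have hABne : v (i + μa) ≠ v (i + 1 + μb) := by
        intro hAB
        have hadj1 : G.Adj (v (i + μa)) (v i) := hadja.symm
        have hadj2 : G.Adj (v (i + μa)) (v (i+1)) := by rw [hAB]; exact hadjb.symm
        have hadj3 : G.Adj (v (i + μa)) (v (i + μa + 1)) := hcyc _
        have hadj4 : G.Adj (v (i + μa)) (v (i + μa - 1)) := by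
          have h5 := hcyc (i + μa - 1)
          rw [sub_add_cancel] at h5
          exact h5.symm
        have ne12 : v i ≠ v (i+1) := dC0.symm
        have ne13 : v (i) ≠ v (i + μa + 1) := by
          intro h
          have h3 := hvinj h
          have h4 : μa = ((n-1 : ℕ) : ZMod n) := by
            rw [castn1 (by omega)]
            linear_combination -h3
          have := hμval _ _ (by omega) h4
          omega
        have ne14 : v (i) ≠ v (i + μa - 1) := by
          intro h
          have h3 := hvinj h
          have h4 : μa = ((1 : ℕ) : ZMod n) := by
            rw [Nat.cast_one]
            linear_combination -h3
          have := hμval _ _ (by omega) h4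
          omega
        have ne23 : v (i + 1) ≠ v (i + μa + 1) := by
          intro h
          have h3 := hvinj h
          have h4 : μa = ((0 : ℕ) : ZMod n) := by
            rw [Nat.cast_zero]
            linear_combination -h3
          have := hμval _ _ (by omega) h4
          omega
        have ne24 : v (i + 1) ≠ v (i + μa - 1) := by
          intro h
          have h3 := hvinj h
          have h4 : μa = ((2 : ℕ) : ZMod n) := by
            rw [Nat.cast_two]
            linear_combination -h3
          have := hμval _ _ (by omega) h4
          omega
        have ne34 : v (i + μa + 1) ≠ v (i + μa - 1) := by
          have := dC (i + μa - 1) 2 (by omega) (by omega)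
          rwa [show i + μa - 1 + ((2:ℕ) : ZMod n) = i + μa + 1 from by push_cast; ring] at this
        have hsub : ({v i, v (i+1), v (i + μa + 1), v (i + μa - 1)} : Finset V) ⊆
            G.neighborFinset (v (i + μa)) := by
          intro x hx
          simp only [Finset.mem_insert, Finset.mem_singleton] at hx
          rw [SimpleGraph.mem_neighborFinset]
          rcases hx with rfl | rfl | rfl | rfl
          · exact hadj1
          · exact hadj2
          · exact hadj3
          · exact hadj4
        have hcard : ({v i, v (i+1), v (i + μa + 1), v (i + μa - 1)} : Finset V).card = 4 := by
          rw [Finset.card_insert_of_notMem (by simp [ne12, ne13, ne14]),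
            Finset.card_insert_of_notMem (by simp [ne23, ne24]),
            Finset.card_insert_of_notMem (by simp [ne34]),
            Finset.card_singleton]
        have hle := Finset.card_le_card hsub
        rw [hcard, SimpleGraph.card_neighborFinset_eq_degree] at hle
        have := hdeg (v (i + μa))
        omega
      -- build the double star
      apply hfree
      refine ⟨v i, v (i+1), {v (i-1), v (i + μa)}, {v (i+2), v (i + 1 + μb)}, hcyc i,
        ?_, ?_, ?_, ?_, ?_, ?_, ?_⟩
      · rw [Finset.card_insert_of_notMem (by simp [dA1.symm]), Finset.card_singleton]
      · rw [Finset.card_insert_of_notMem (by simp [dB1.symm]), Finset.card_singleton]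
      · rw [Finset.disjoint_left]
        intro x hx hy
        simp only [Finset.mem_insert, Finset.mem_singleton] at hx hy
        rcases hx with rfl | rfl <;> rcases hy with h | h
        · exact dC2 h.symm
        · exact dB2 h.symm
        · exact dA2 h
        · exact hABne h
      · simp only [Finset.mem_insert, Finset.mem_singleton]
        push_neg
        exact ⟨dC1, dA3.symm⟩
      · simp only [Finset.mem_insert, Finset.mem_singleton]
        push_neg
        exact ⟨dC3.symm, dB3.symm⟩
      · intro w hw
        simp only [Finset.mem_insert, Finset.mem_singleton] at hw
        rcases hw with rfl | rfl
        · have h5 := hcyc (i - 1)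
          rw [sub_add_cancel] at h5
          exact h5.symm
        · exact hadja
      · intro w hw
        simp only [Finset.mem_insert, Finset.mem_singleton] at hw
        rcases hw with rfl | rfl
        · have h5 := hcyc (i + 1)
          rwa [show i + 1 + 1 = i + 2 from by ring] at h5
        · exact hadjb
  refine ⟨part1, ?_⟩
  set E := Finset.univ.filter (fun i : ZMod n => G.degree (v i) = 3) with hE
  have himg : (Finset.univ.filter fun w : V => G.degree w = 3).card = E.card := by
    symm
    apply Finset.card_bij (fun (i : ZMod n) (_ : i ∈ E) => v i)
    · intro i hi
      simp only [hE, Finset.mem_filter, Finset.mem_univ, true_and] at hi ⊢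
      exact hi
    · intro i hi j hj h
      exact hbij.1 h
    · intro w hw
      obtain ⟨i, rfl⟩ := hbij.2 w
      simp only [Finset.mem_filter, Finset.mem_univ, true_and] at hw
      exact ⟨i, by simp only [hE, Finset.mem_filter, Finset.mem_univ, true_and]; exact hw, rfl⟩
  have hdisj : Disjoint E (E.image (· + 1)) := by
    rw [Finset.disjoint_left]
    intro x hx hx'
    obtain ⟨j, hj, hjx⟩ := Finset.mem_image.1 hx'
    simp only [hE, Finset.mem_filter, Finset.mem_univ, true_and] at hx hj
    exact part1 j ⟨hj, by rw [hjx]; exact hx⟩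
  have h2 : (E.image (· + 1)).card = E.card :=
    Finset.card_image_of_injective _ (add_left_injective 1)
  have h1 : (E ∪ E.image (· + 1)).card = E.card + (E.image (· + 1)).card :=
    Finset.card_union_of_disjoint hdisj
  have h3 : (E ∪ E.image (· + 1)).card ≤ n := by
    have h4 : (E ∪ E.image (· + 1)).card ≤ Fintype.card (ZMod n) := by
      simpa using Finset.card_le_univ (E ∪ E.image (· + 1))
    rwa [ZMod.card] at h4
  rw [himg]
  omega
end

section
/- Let G be a connected outerplanar graph on at least 6 vertices that contains no subgraph isomorphic to the double star S_{2,2}. Then G contains no subgraph isomorphic to M_5, the unique maximal outerplanar graph on 5 vertices (a 5-cycle u_1u_2u_3u_4u_5 together with the two chords u_1u_3 and u_3u_5). -/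
open SimpleGraph Finset

/-- `M_5`: the unique maximal outerplanar graph on 5 vertices, a 5-cycle
`0 1 2 3 4` with the two chords `0-2` and `2-4`. -/
def M5 : SimpleGraph (Fin 5) :=
  SimpleGraph.fromEdgeSet {s(0, 1), s(1, 2), s(2, 3), s(3, 4), s(4, 0), s(0, 2), s(2, 4)}

lemma exists_boundary {V : Type*} {G : SimpleGraph V} {S : Set V} {a b : V}
    (w : G.Walk a b) (ha : a ∉ S) (hb : b ∈ S) :
    ∃ x y, G.Adj x y ∧ x ∉ S ∧ y ∈ S := by
  induction w with
  | nil => exact absurd hb ha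
  | @cons a c b h p ih =>
    by_cases hc : c ∈ S
    · exact ⟨a, c, h, ha, hc⟩
    · exact ih hc hb

lemma ds_of {V : Type*} [DecidableEq V] {G : SimpleGraph V} {x y a b c d : V}
    (hxy : G.Adj x y) (hxa : G.Adj x a) (hxb : G.Adj x b)
    (hyc : G.Adj y c) (hyd : G.Adj y d)
    (hab : a ≠ b) (hcd : c ≠ d) (hac : a ≠ c) (had : a ≠ d) (hbc : b ≠ c) (hbd : b ≠ d)
    (hya : y ≠ a) (hyb : y ≠ b) (hxc : x ≠ c) (hxd : x ≠ d) :
    ContainsDoubleStar G 2 2 := by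
  refine ⟨x, y, {a, b}, {c, d}, hxy, Finset.card_pair hab, Finset.card_pair hcd,
    ?_, ?_, ?_, ?_, ?_⟩
  · simp [Finset.disjoint_insert_left, hac, had, hbc, hbd]
    exact ⟨⟨fun h => hac h.symm, fun h => hbc h.symm⟩,
      fun h => had h.symm, fun h => hbd h.symm⟩
  · simp [hya.symm, hyb.symm]
    exact ⟨hya, hyb⟩
  · simp [hxc.symm, hxd.symm]
    exact ⟨hxc, hxd⟩
  · intro v hv
    rcases Finset.mem_insert.mp hv with h | h
    · exact h ▸ hxa
    · exact (Finset.mem_singleton.mp h) ▸ hxb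
  · intro v hv
    rcases Finset.mem_insert.mp hv with h | h
    · exact h ▸ hyc
    · exact (Finset.mem_singleton.mp h) ▸ hyd

theorem stmt4 {V : Type*} [Fintype V] (G : SimpleGraph V)
    (hn : 6 ≤ Nat.card V) (hconn : G.Connected) (hop : IsOuterplanar G)
    (hfree : ¬ ContainsDoubleStar G 2 2) :
    ¬ ∃ f : Fin 5 → V, Function.Injective f ∧
      ∀ a b : Fin 5, M5.Adj a b → G.Adj (f a) (f b) := by
  classical
  rintro ⟨f, hf, hadj⟩
  apply hfree
  -- edges of the M5 copy
  have e01 : G.Adj (f 0) (f 1) := hadj 0 1 (by simp [M5])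
  have e12 : G.Adj (f 1) (f 2) := hadj 1 2 (by simp [M5])
  have e23 : G.Adj (f 2) (f 3) := hadj 2 3 (by simp [M5])
  have e34 : G.Adj (f 3) (f 4) := hadj 3 4 (by simp [M5])
  have e40 : G.Adj (f 4) (f 0) := hadj 4 0 (by simp [M5])
  have e02 : G.Adj (f 0) (f 2) := hadj 0 2 (by simp [M5])
  have e24 : G.Adj (f 2) (f 4) := hadj 2 4 (by simp [M5])
  -- a vertex outside the copy
  have hcard : (Finset.univ.image f).card < (Finset.univ : Finset V).card := by
    have h1 : (Finset.univ.image f).card ≤ 5 :=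
      le_trans Finset.card_image_le (by simp)
    have h2 : (Finset.univ : Finset V).card = Nat.card V := by
      rw [Finset.card_univ, Nat.card_eq_fintype_card]
    omega
  obtain ⟨u, hu⟩ : ∃ u, u ∉ Finset.univ.image f := by
    by_contra h
    push_neg at h
    have hsub : (Finset.univ : Finset V) ⊆ Finset.univ.image f := fun v _ => h v
    exact absurd (Finset.card_le_card hsub) (by omega)
  have hur : u ∉ Set.range f := by
    rintro ⟨i, rfl⟩
    exact hu (Finset.mem_image_of_mem f (Finset.mem_univ i))
  -- find an edge from outside the copy into it
  obtain ⟨w⟩ := hconn.preconnected u (f 2)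
  obtain ⟨x, y, hxy, hx, hy⟩ := exists_boundary w hur ⟨2, rfl⟩
  have hxne : ∀ j : Fin 5, x ≠ f j := fun j h => hx ⟨j, h.symm⟩
  obtain ⟨i, rfl⟩ := hy
  have hne : ∀ i j : Fin 5, i ≠ j → f i ≠ f j := fun i j h => fun hh => h (hf hh)
  fin_cases i
  · -- x adj f 0 : centers f 0, f 2; X = {f 4, x}, Y = {f 1, f 3}
    exact ds_of e02 e40.symm hxy.symm e12.symm e23
      (hxne 4).symm (hne 1 3 (by decide)) (hne 4 1 (by decide)) (hne 4 3 (by decide))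
      (hxne 1) (hxne 3) (hne 2 4 (by decide)) (fun h => hxne 2 h.symm)
      (hne 0 1 (by decide)) (hne 0 3 (by decide))
  · -- x adj f 1 : centers f 1, f 2; X = {f 0, x}, Y = {f 3, f 4}
    exact ds_of e12 e01.symm hxy.symm e23 e24
      (hxne 0).symm (hne 3 4 (by decide)) (hne 0 3 (by decide)) (hne 0 4 (by decide))
      (hxne 3) (hxne 4) (hne 2 0 (by decide)) (fun h => hxne 2 h.symm)
      (hne 1 3 (by decide)) (hne 1 4 (by decide))
  · -- x adj f 2 : centers f 2, f 0; X = {f 3, x}, Y = {f 1, f 4}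
    exact ds_of e02.symm e23 hxy.symm e01 e40.symm
      (hxne 3).symm (hne 1 4 (by decide)) (hne 3 1 (by decide)) (hne 3 4 (by decide))
      (hxne 1) (hxne 4) (hne 0 3 (by decide)) (fun h => hxne 0 h.symm)
      (hne 2 1 (by decide)) (hne 2 4 (by decide))
  · -- x adj f 3 : centers f 3, f 2; X = {f 4, x}, Y = {f 0, f 1}
    exact ds_of e23.symm e34 hxy.symm e02.symm e12.symm
      (hxne 4).symm (hne 0 1 (by decide)) (hne 4 0 (by decide)) (hne 4 1 (by decide))
      (hxne 0) (hxne 1) (hne 2 4 (by decide)) (fun h => hxne 2 h.symm)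
      (hne 3 0 (by decide)) (hne 3 1 (by decide))
  · -- x adj f 4 : centers f 4, f 2; X = {f 0, x}, Y = {f 1, f 3}
    exact ds_of e24.symm e40 hxy.symm e12.symm e23
      (hxne 0).symm (hne 1 3 (by decide)) (hne 0 1 (by decide)) (hne 0 3 (by decide))
      (hxne 1) (hxne 3) (hne 2 0 (by decide)) (fun h => hxne 2 h.symm)
      (hne 4 1 (by decide)) (hne 4 3 (by decide))
end

section
/- For every n ≥ 6 there exists a connected outerplanar graph on n vertices with exactly ⌊3(n−1)/2⌋ edges that contains no subgraph isomorphic to the double star S_{2,2}. (One such graph is G_n = K_1 + (⌊(n−1)/2⌋ K_2 ∪ ε K_1), the join of a single vertex with a disjoint union of ⌊(n−1)/2⌋ edges and ε ∈ {0,1} isolated vertices, where ε ≡ n−1 (mod 2).) -/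
/-!
Take the friendship graph: an apex joined to every other vertex, the remaining vertices paired
off by a perfect or near-perfect matching. The apex contributes `n - 1` edges and the matching
`⌊(n - 1) / 2⌋`, so there are `⌊3(n - 1) / 2⌋` edges. Every vertex other than the apex has degree
at most two, whereas both centres of an `S_{2,2}` have degree at least three, and listing the
vertices in their natural order gives a one-page book embedding.
-/

open SimpleGraph Finset

theorem isOuterplanar_of_noncrossing {V : Type*} [LinearOrder V] [Fintype V] {G : SimpleGraph V}
    (h : ∀ a b c d : V, G.Adj a b → G.Adj c d → ¬ (a < c ∧ c < b ∧ b < d)) :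
    IsOuterplanar G := by
  let σ := (Fintype.orderIsoFinOfCardEq V Nat.card_eq_fintype_card.symm).symm
  refine ⟨σ, σ.bijective, fun a b c d hab hcd => ?_⟩
  simpa only [OrderIso.lt_iff_lt] using h a b c d hab hcd

theorem SimpleGraph.connected_of_forall_adj {V : Type*} {G : SimpleGraph V} {c : V}
    (h : ∀ v, v ≠ c → G.Adj c v) : G.Connected :=
  (connected_iff_exists_forall_reachable G).2
    ⟨c, fun v => (eq_or_ne v c).elim (fun hv => hv ▸ .rfl) fun hv => (h v hv).reachable⟩

section DoubleStar

variable {V : Type*} [Fintype V] {G : SimpleGraph V} [DecidableRel G.Adj]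

theorem ContainsDoubleStar.exists_adj_lt_degree {p q : ℕ} (h : ContainsDoubleStar G p q) :
    ∃ x y, G.Adj x y ∧ p < G.degree x ∧ q < G.degree y := by
  obtain ⟨x, y, X, Y, hxy, rfl, rfl, -, hyX, hxY, hX, hY⟩ := h
  have lt_degree {u w : V} {U : Finset V} (huw : G.Adj u w) (hwU : w ∉ U)
      (hU : ∀ v ∈ U, G.Adj u v) : #U < G.degree u := by
    classical
    rw [← card_neighborFinset_eq_degree, Nat.lt_iff_add_one_le, ← card_insert_of_notMem hwU]
    exact card_le_card <| insert_subset_iff.2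
      ⟨(mem_neighborFinset _ _ _).2 huw, fun v hv => (mem_neighborFinset _ _ _).2 (hU v hv)⟩
  exact ⟨x, y, hxy, lt_degree hxy hyX hX, lt_degree hxy.symm hxY hY⟩

theorem not_containsDoubleStar_of_degree_le (c : V) {p : ℕ}
    (h : ∀ v, v ≠ c → G.degree v ≤ p) : ¬ ContainsDoubleStar G p p := by
  intro hG
  obtain ⟨x, y, hxy, hx, hy⟩ := hG.exists_adj_lt_degree
  obtain rfl | hxc := eq_or_ne x c
  · exact (h y hxy.ne.symm).not_gt hy
  · exact (h x hxc).not_gt hx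

end DoubleStar

/-- Vertex `0` is the apex and `2k - 1, 2k` form the `k`-th pair, which is what
`(a + 1) / 2 = (b + 1) / 2` detects; for odd `m` the vertex `m` is left unpaired. -/
def friendshipGraph (m : ℕ) : SimpleGraph (Fin (m + 1)) where
  Adj a b := a ≠ b ∧ (a = 0 ∨ b = 0 ∨ (a.val + 1) / 2 = (b.val + 1) / 2)
  symm := ⟨fun _ _ h => ⟨h.1.symm, by tauto⟩⟩
  loopless := ⟨fun _ h => h.1 rfl⟩

namespace friendshipGraph

variable {m : ℕ}

theorem adj_iff {a b : Fin (m + 1)} :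
    (friendshipGraph m).Adj a b ↔
      a ≠ b ∧ (a = 0 ∨ b = 0 ∨ (a.val + 1) / 2 = (b.val + 1) / 2) :=
  Iff.rfl

instance : DecidableRel (friendshipGraph m).Adj := fun _ _ => decidable_of_iff' _ adj_iff

theorem adj_zero {v : Fin (m + 1)} (hv : v ≠ 0) : (friendshipGraph m).Adj 0 v :=
  ⟨hv.symm, Or.inl rfl⟩

theorem noncrossing (a b c d : Fin (m + 1)) :
    (friendshipGraph m).Adj a b → (friendshipGraph m).Adj c d → ¬ (a < c ∧ c < b ∧ b < d) := by
  simp only [adj_iff, ne_eq, Fin.ext_iff, Fin.val_zero, Fin.lt_def]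
  omega

theorem degree_le_two {v : Fin (m + 1)} (hv : v ≠ 0) : (friendshipGraph m).degree v ≤ 2 := by
  by_contra! h
  rw [← card_neighborFinset_eq_degree] at h
  obtain ⟨a, b, c, ha, hb, hc, hab, hac, hbc⟩ := two_lt_card_iff.1 h
  simp only [mem_neighborFinset, adj_iff, ne_eq, Fin.ext_iff, Fin.val_zero] at *
  omega

def edgeOf : Fin m ⊕ Fin (m / 2) → Sym2 (Fin (m + 1))
  | .inl i => s(0, i.succ)
  | .inr k => s(⟨2 * k + 1, by omega⟩, ⟨2 * k + 2, by omega⟩)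

theorem edgeOf_injective : Function.Injective (edgeOf (m := m)) := by
  rintro (i | k) (j | l) h <;>
    simp only [edgeOf, Sym2.eq_iff, Fin.ext_iff, Fin.val_succ, Fin.val_zero, Sum.inl.injEq,
      Sum.inr.injEq, reduceCtorEq, true_and, false_and, and_false, or_false] at h ⊢ <;> omega

theorem range_edgeOf : Set.range (edgeOf (m := m)) = (friendshipGraph m).edgeSet := by
  ext e
  induction e with | h a b => ?_
  simp only [Set.mem_range, mem_edgeSet, adj_iff]
  constructor
  · rintro ⟨i | k, h⟩ <;>
      simp only [edgeOf, Sym2.eq_iff, Fin.ext_iff, Fin.val_succ, Fin.val_zero] at h ⊢ <;> omega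
  · rintro ⟨hab, rfl | rfl | h⟩
    · exact ⟨.inl (b.pred hab.symm), by simp [edgeOf]⟩
    · exact ⟨.inl (a.pred hab), by simp [edgeOf, Sym2.eq_swap]⟩
    · refine ⟨.inr ⟨(a.val + 1) / 2 - 1, by omega⟩, ?_⟩
      simp only [edgeOf, Sym2.eq_iff, Fin.ext_iff]
      omega

theorem card_edgeSet : Nat.card (friendshipGraph m).edgeSet = m + m / 2 := by
  rw [← range_edgeOf, Nat.card_range_of_injective edgeOf_injective, Nat.card_sum, Nat.card_fin,
    Nat.card_fin]

end friendshipGraph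

theorem stmt8 (n : ℕ) (hn : 6 ≤ n) :
    ∃ G : SimpleGraph (Fin n), G.Connected ∧ IsOuterplanar G ∧
      ¬ ContainsDoubleStar G 2 2 ∧ Nat.card G.edgeSet = 3 * (n - 1) / 2 := by
  obtain ⟨m, rfl⟩ : ∃ m, n = m + 1 := ⟨n - 1, by omega⟩
  refine ⟨friendshipGraph m, connected_of_forall_adj fun _ => friendshipGraph.adj_zero,
    isOuterplanar_of_noncrossing friendshipGraph.noncrossing,
    not_containsDoubleStar_of_degree_le 0 fun _ => friendshipGraph.degree_le_two, ?_⟩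
  rw [friendshipGraph.card_edgeSet]
  omega
end

section
/- For all integers p, q with q ≥ p ≥ 2 and (p ≥ 3 or q ≥ 4), and all n ≥ p + q + 2, the maximum number of edges in an n-vertex outerplanar graph containing no subgraph isomorphic to the double star S_{p,q} equals 2n − 3. -/
/-!
Upper bound: a one-page book embedding turns the edges into pairwise noncrossing chords over
the positions `0, …, n - 1`. Apart from the outer chord `(lo, hi)`, the chords of such a family
avoid some interior position `c` (the far end of the longest other chord at `lo`), so they
split into noncrossing families over `[lo, c]` and `[c, hi]`, and induction bounds the number
of chords by `2 (hi - lo) - 1`, i.e. `2n - 3` edges.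

Lower bound: the square of the path on `n` vertices has `2n - 3` edges, is outerplanar
(vertices in the order `0, 2, 4, …, 5, 3, 1`), has maximum degree `4`, and for `n ≥ 3` every
edge lies in a triangle. Either `q ≥ 4`, and `S_{p,q}` needs a vertex of degree `5`, or
`p = q = 3`; then each centre has degree `4`, so the third vertex of a triangle on the central
edge would be a leaf at both centres.
-/

open SimpleGraph Finset

namespace Finset

def Noncrossing (E : Finset (ℕ × ℕ)) : Prop :=
  ∀ e ∈ E, ∀ f ∈ E, ¬(e.1 < f.1 ∧ f.1 < e.2 ∧ e.2 < f.2)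

theorem Noncrossing.mono {E F : Finset (ℕ × ℕ)} (hE : E.Noncrossing) (hFE : F ⊆ E) :
    F.Noncrossing :=
  fun e he f hf => hE e (hFE he) f (hFE hf)

theorem Noncrossing.exists_split {lo hi : ℕ} {E : Finset (ℕ × ℕ)} (hE : E.Noncrossing)
    (hbound : ∀ e ∈ E, lo ≤ e.1 ∧ e.1 < e.2 ∧ e.2 ≤ hi) (hlohi : lo + 2 ≤ hi) :
    ∃ c, lo < c ∧ c < hi ∧ ∀ e ∈ E, e ≠ (lo, hi) → e.2 ≤ c ∨ c ≤ e.1 := by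
  have hlt_hi : ∀ e ∈ E, e ≠ (lo, hi) → e.1 = lo → e.2 < hi := fun e he hne he1 =>
    lt_of_le_of_ne (hbound e he).2.2 fun he2 => hne (Prod.ext he1 he2)
  set L := E.filter (fun e => e.1 = lo ∧ e.2 < hi)
  rcases L.eq_empty_or_nonempty with hL | hL
  · refine ⟨lo + 1, by omega, by omega, fun e he hne => Or.inr ?_⟩
    have hnot : ¬(e.1 = lo ∧ e.2 < hi) := fun h =>
      (eq_empty_iff_forall_notMem.1 hL) e (mem_filter.2 ⟨he, h⟩)
    have := hbound e he
    have := hlt_hi e he hne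
    omega
  · obtain ⟨m, hmL, hmax⟩ := L.exists_max_image Prod.snd hL
    obtain ⟨hmE, hm1, hm2⟩ := mem_filter.1 hmL
    refine ⟨m.2, by have := hbound m hmE; omega, hm2, fun e he hne => ?_⟩
    by_cases he1 : e.1 = lo
    · exact Or.inl (hmax e (mem_filter.2 ⟨he, he1, hlt_hi e he hne he1⟩))
    · have := hbound e he
      have := hE m hmE e he
      omega

theorem Noncrossing.card_le {lo hi : ℕ} {E : Finset (ℕ × ℕ)} (hE : E.Noncrossing)
    (hbound : ∀ e ∈ E, lo ≤ e.1 ∧ e.1 < e.2 ∧ e.2 ≤ hi) :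
    #E ≤ 2 * (hi - lo) - 1 := by
  induction h : hi - lo using Nat.strong_induction_on generalizing lo hi E with
  | _ N ih =>
  obtain _ | _ | N := N
  · have : E = ∅ := eq_empty_of_forall_notMem fun e he => by have := hbound e he; omega
    simp [this]
  · refine card_le_one.2 fun e he f hf => ?_
    have := hbound e he
    have := hbound f hf
    exact Prod.ext (by omega) (by omega)
  · obtain ⟨c, hlc, hch, hsplit⟩ := hE.exists_split hbound (by omega)
    set A := E.filter (fun e => e.2 ≤ c)
    set B := E.filter (fun e => c ≤ e.1)
    have hA : #A ≤ 2 * (c - lo) - 1 := ih (c - lo) (by omega) (hE.mono (filter_subset _ _))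
      (fun e he => by have := hbound e (mem_filter.1 he).1; have := (mem_filter.1 he).2; omega) rfl
    have hB : #B ≤ 2 * (hi - c) - 1 := ih (hi - c) (by omega) (hE.mono (filter_subset _ _))
      (fun e he => by have := hbound e (mem_filter.1 he).1; have := (mem_filter.1 he).2; omega) rfl
    have hcover : E ⊆ insert (lo, hi) (A ∪ B) := fun e he => by
      by_cases hne : e = (lo, hi)
      · exact mem_insert.2 (Or.inl hne)
      · rcases hsplit e he hne with h | h
        · exact mem_insert_of_mem (mem_union_left _ (mem_filter.2 ⟨he, h⟩))
        · exact mem_insert_of_mem (mem_union_right _ (mem_filter.2 ⟨he, h⟩))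
    calc #E ≤ #(insert (lo, hi) (A ∪ B)) := card_le_card hcover
      _ ≤ #A + #B + 1 := (card_insert_le _ _).trans (by grw [card_union_le])
      _ ≤ 2 * (N + 2) - 1 := by omega

end Finset

namespace SimpleGraph

variable {V : Type*}

theorem card_edgeFinset_eq_card_filter_lt [LinearOrder V] [Fintype V] (G : SimpleGraph V)
    [DecidableRel G.Adj] : #G.edgeFinset = #{p : V × V | p.1 < p.2 ∧ G.Adj p.1 p.2} := by
  symm
  refine card_nbij (fun p => s(p.1, p.2)) (fun p hp => by simpa using (mem_filter.1 hp).2.2)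
    ?_ ?_
  · rintro ⟨a, b⟩ hab ⟨c, d⟩ hcd h
    simp only [coe_filter, mem_univ, true_and] at hab hcd
    rcases Sym2.eq_iff.1 h with ⟨rfl, rfl⟩ | ⟨rfl, rfl⟩
    · rfl
    · exact absurd (hab.1.trans hcd.1) (lt_irrefl _)
  · intro e he
    induction e using Sym2.ind with
    | _ a b =>
    have hab : G.Adj a b := by simpa using he
    rcases hab.ne.lt_or_gt with h | h
    · exact ⟨(a, b), by simpa using ⟨h, hab⟩, rfl⟩
    · exact ⟨(b, a), by simpa using ⟨h, hab.symm⟩, Sym2.eq_swap⟩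

theorem card_edgeFinset_le_of_noncrossing {m : ℕ} (H : SimpleGraph (Fin m)) [DecidableRel H.Adj]
    (h : ∀ a b c d, H.Adj a b → H.Adj c d → ¬(a < c ∧ c < b ∧ b < d)) :
    #H.edgeFinset ≤ 2 * m - 3 := by
  have hval : Function.Injective (Prod.map Fin.val Fin.val : Fin m × Fin m → ℕ × ℕ) :=
    Fin.val_injective.prodMap Fin.val_injective
  rw [card_edgeFinset_eq_card_filter_lt, ← card_image_of_injective _ hval]
  set E : Finset (Fin m × Fin m) := {p | p.1 < p.2 ∧ H.Adj p.1 p.2}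
  have hnc : (E.image (Prod.map Fin.val Fin.val)).Noncrossing := by
    simp only [Noncrossing, mem_image, forall_exists_index, and_imp]
    rintro _ ⟨a, b⟩ hab rfl _ ⟨c, d⟩ hcd rfl
    simp only [E, mem_filter, mem_univ, true_and] at hab hcd
    exact h a b c d hab.2 hcd.2
  have hbound :
      ∀ e ∈ E.image (Prod.map Fin.val Fin.val), 0 ≤ e.1 ∧ e.1 < e.2 ∧ e.2 ≤ m - 1 := by
    simp only [mem_image]
    rintro _ ⟨⟨a, b⟩, hab, rfl⟩
    simp only [E, mem_filter, mem_univ, true_and] at hab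
    have := b.isLt
    exact ⟨Nat.zero_le _, hab.1, by show b.val ≤ m - 1; omega⟩
  have := hnc.card_le hbound
  omega

end SimpleGraph

theorem IsOuterplanar.card_edgeSet_le {V : Type*} {G : SimpleGraph V} (hG : IsOuterplanar G) :
    Nat.card G.edgeSet ≤ 2 * Nat.card V - 3 := by
  classical
  obtain ⟨σ, hσ, hnc⟩ := hG
  let e := Equiv.ofBijective σ hσ
  rw [Nat.card_congr (Iso.map e G).mapEdgeSet, Nat.card_eq_fintype_card, ← edgeFinset_card]
  refine card_edgeFinset_le_of_noncrossing _ ?_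
  rintro _ _ _ _ ⟨-, a, b, hab, rfl, rfl⟩ ⟨-, c, d, hcd, rfl, rfl⟩
  exact hnc a b c d hab hcd

theorem isOuterplanar_of_injective {V : Type*} [Finite V] {G : SimpleGraph V} (σ : V → ℕ)
    (hσ : Function.Injective σ) (hlt : ∀ v, σ v < Nat.card V)
    (h : ∀ a b c d, G.Adj a b → G.Adj c d → ¬(σ a < σ c ∧ σ c < σ b ∧ σ b < σ d)) :
    IsOuterplanar G := by
  refine ⟨fun v => ⟨σ v, hlt v⟩, ?_, fun a b c d hab hcd => by
    simpa only [Fin.lt_def] using h a b c d hab hcd⟩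
  exact Function.Injective.bijective_of_nat_card_le
    (fun u v huv => hσ (congrArg Fin.val huv)) (by simp)

namespace SimpleGraph

variable {V : Type*} [Fintype V] {G : SimpleGraph V} [DecidableRel G.Adj] {p q : ℕ}

theorem not_containsDoubleStar_of_degree_le (h : ∀ v, G.degree v ≤ q) :
    ¬ ContainsDoubleStar G p q := by
  classical
  rintro ⟨x, y, X, Y, hxy, -, hY, -, -, hxY, -, hYy⟩
  have hsub : insert x Y ⊆ G.neighborFinset y := fun v hv => by
    rcases mem_insert.1 hv with rfl | hv
    · simpa using hxy.symm
    · simpa using hYy v hv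
  have := card_le_card hsub
  rw [card_insert_of_notMem hxY, hY, card_neighborFinset_eq_degree] at this
  have := h y
  omega

theorem not_containsDoubleStar_of_degree_le_of_commonNeighbors_nonempty (hpq : p ≤ q)
    (hdeg : ∀ v, G.degree v ≤ p + 1)
    (htri : ∀ x y, G.Adj x y → (G.commonNeighbors x y).Nonempty) :
    ¬ ContainsDoubleStar G p q := by
  classical
  rintro ⟨x, y, X, Y, hxy, hX, hY, hXY, hyX, hxY, hXx, hYy⟩
  have hN : ∀ {u w : V} {W : Finset V}, G.Adj u w → w ∉ W → (∀ v ∈ W, G.Adj u v) →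
      G.degree u ≤ #W + 1 → G.neighborFinset u = insert w W := fun huw hwW hW hdeg => by
    refine (eq_of_subset_of_card_le (fun v hv => ?_) ?_).symm
    · rcases mem_insert.1 hv with rfl | hv
      · simpa using huw
      · simpa using hW v hv
    · rwa [card_insert_of_notMem hwW, card_neighborFinset_eq_degree]
  have hNx := hN hxy hyX hXx (by rw [hX]; exact hdeg x)
  have hNy := hN hxy.symm hxY hYy (by rw [hY]; exact (hdeg y).trans (by omega))
  obtain ⟨z, hxz, hyz⟩ := htri x y hxy
  have hzX : z ∈ X := by
    have : z ∈ insert y X := hNx ▸ (mem_neighborFinset _ _ _).2 hxz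
    exact (mem_insert.1 this).resolve_left fun h => G.irrefl (h ▸ hyz)
  have hzY : z ∈ Y := by
    have : z ∈ insert x Y := hNy ▸ (mem_neighborFinset _ _ _).2 hyz
    exact (mem_insert.1 this).resolve_left fun h => G.irrefl (h ▸ hxz)
  exact Finset.disjoint_left.1 hXY hzX hzY

end SimpleGraph

/-- The square of the path `0 - 1 - ⋯ - (n - 1)`. -/
def pathSquare (n : ℕ) : SimpleGraph (Fin n) where
  Adj i j := i ≠ j ∧ i.val ≤ j.val + 2 ∧ j.val ≤ i.val + 2
  symm := ⟨fun _ _ h => ⟨h.1.symm, h.2.2, h.2.1⟩⟩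
  loopless := ⟨fun _ h => h.1 rfl⟩

instance (n : ℕ) : DecidableRel (pathSquare n).Adj :=
  fun _ _ => inferInstanceAs (Decidable (_ ∧ _ ∧ _))

theorem pathSquare_adj_iff {n : ℕ} {i j : Fin n} :
    (pathSquare n).Adj i j ↔ i ≠ j ∧ i.val ≤ j.val + 2 ∧ j.val ≤ i.val + 2 :=
  Iff.rfl

theorem degree_pathSquare_le {n : ℕ} (x : Fin n) : (pathSquare n).degree x ≤ 4 := by
  rw [← card_neighborFinset_eq_degree]
  calc #((pathSquare n).neighborFinset x)
      ≤ #({x.val - 2, x.val - 1, x.val + 1, x.val + 2} : Finset ℕ) := by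
        refine card_le_card_of_injOn Fin.val (fun v hv => ?_) Fin.val_injective.injOn
        have := (mem_neighborFinset _ _ _).1 hv
        rw [pathSquare_adj_iff, ne_eq, Fin.ext_iff] at this
        simp only [coe_insert, coe_singleton, Set.mem_insert_iff, Set.mem_singleton_iff]
        omega
    _ ≤ 4 := card_le_four

theorem commonNeighbors_pathSquare_nonempty {n : ℕ} (hn : 3 ≤ n) {x y : Fin n}
    (hxy : (pathSquare n).Adj x y) : ((pathSquare n).commonNeighbors x y).Nonempty := by
  rw [pathSquare_adj_iff, ne_eq, Fin.ext_iff] at hxy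
  have := x.isLt
  have := y.isLt
  have common : ∀ z < n, z ≠ x.val ∧ z ≠ y.val ∧ z ≤ x.val + 2 ∧ x.val ≤ z + 2 ∧
      z ≤ y.val + 2 ∧ y.val ≤ z + 2 → ((pathSquare n).commonNeighbors x y).Nonempty :=
    fun z hz hzxy => ⟨⟨z, hz⟩, by
      simp only [mem_commonNeighbors, pathSquare_adj_iff, ne_eq, Fin.ext_iff]; omega⟩
  by_cases hfar : x.val + 2 = y.val ∨ y.val + 2 = x.val
  · exact common ((x.val + y.val) / 2) (by omega) (by omega)
  by_cases htop : max x.val y.val + 1 < n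
  · exact common (max x.val y.val + 1) htop (by omega)
  · exact common (min x.val y.val - 1) (by omega) (by omega)

theorem not_containsDoubleStar_pathSquare {n p q : ℕ} (hn : 3 ≤ n) (hpq : p ≤ q)
    (hpq4 : 3 ≤ p ∨ 4 ≤ q) : ¬ ContainsDoubleStar (pathSquare n) p q := by
  rcases le_or_gt 4 q with hq | hq
  · exact not_containsDoubleStar_of_degree_le fun v => (degree_pathSquare_le v).trans hq
  · obtain rfl : p = 3 := by omega
    exact not_containsDoubleStar_of_degree_le_of_commonNeighbors_nonempty hpq
      degree_pathSquare_le fun _ _ => commonNeighbors_pathSquare_nonempty hn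

theorem sum_range_min_two (n : ℕ) : ∑ b ∈ range n, min b 2 = 2 * n - 3 := by
  induction n with
  | zero => rfl
  | succ n ih => rw [sum_range_succ, ih]; omega

theorem card_filter_pathSquare_adj_lt {n : ℕ} (b : Fin n) :
    #{a : Fin n | a < b ∧ (pathSquare n).Adj a b} = min b.val 2 := by
  rw [← card_map Fin.valEmbedding]
  have : map Fin.valEmbedding {a : Fin n | a < b ∧ (pathSquare n).Adj a b} =
      Ico (b.val - 2) b := by
    ext m
    simp only [mem_map, mem_filter, mem_univ, true_and, Fin.valEmbedding_apply, mem_Ico,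
      pathSquare_adj_iff, ne_eq, Fin.lt_def, Fin.ext_iff]
    constructor
    · rintro ⟨a, ⟨h1, -, -, h2⟩, rfl⟩
      omega
    · rintro ⟨h1, h2⟩
      exact ⟨⟨m, by omega⟩, by dsimp only; omega, rfl⟩
  rw [this, Nat.card_Ico]
  omega

theorem card_edgeSet_pathSquare (n : ℕ) : Nat.card (pathSquare n).edgeSet = 2 * n - 3 := by
  rw [Nat.card_eq_fintype_card, ← edgeFinset_card, card_edgeFinset_eq_card_filter_lt, card_filter,
    Fintype.sum_prod_type_right]
  simp only [← card_filter, card_filter_pathSquare_adj_lt]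
  rw [Fin.sum_univ_eq_sum_range (fun b => min b 2), sum_range_min_two]

/-- The position of vertex `v` when the vertices of `pathSquare n` are listed in the order
`0, 2, 4, …, 5, 3, 1` around its outer face. -/
def zigzag (n v : ℕ) : ℕ := if v % 2 = 0 then v / 2 else n - 1 - v / 2

/-- Chords of these two kinds (between consecutive positions, or with positions summing to
`n - 1` or `n`) never cross. -/
theorem zigzag_of_pathSquare_adj {n : ℕ} {u v : Fin n} (h : (pathSquare n).Adj u v) :
    zigzag n u + 1 = zigzag n v ∨ zigzag n v + 1 = zigzag n u ∨
      zigzag n u + zigzag n v + 1 = n ∨ zigzag n u + zigzag n v = n := by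
  rw [pathSquare_adj_iff, ne_eq, Fin.ext_iff] at h
  have := u.isLt
  have := v.isLt
  unfold zigzag
  split_ifs <;> omega

theorem isOuterplanar_pathSquare (n : ℕ) : IsOuterplanar (pathSquare n) := by
  refine isOuterplanar_of_injective (fun v => zigzag n v) (fun u v h => ?_) (fun v => ?_)
    fun a b c d hab hcd => ?_
  · have := u.isLt
    have := v.isLt
    simp only [zigzag] at h
    exact Fin.ext (by split_ifs at h <;> omega)
  · have := v.isLt
    simp only [Nat.card_eq_fintype_card, Fintype.card_fin, zigzag]
    split_ifs <;> omega
  · have := zigzag_of_pathSquare_adj hab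
    have := zigzag_of_pathSquare_adj hcd
    omega

theorem stmt13_general (p q n : ℕ) (hpq : p ≤ q) (hpq4 : 3 ≤ p ∨ 4 ≤ q)
    (hn : p + q + 2 ≤ n) :
    IsGreatest {m : ℕ | ∃ G : SimpleGraph (Fin n), IsOuterplanar G ∧
      ¬ ContainsDoubleStar G p q ∧ Nat.card G.edgeSet = m} (2 * n - 3) := by
  refine ⟨⟨pathSquare n, isOuterplanar_pathSquare n,
    not_containsDoubleStar_pathSquare (by omega) hpq hpq4, card_edgeSet_pathSquare n⟩, ?_⟩
  rintro m ⟨G, hG, -, rfl⟩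
  simpa using hG.card_edgeSet_le

theorem stmt13 (p q n : ℕ) (hp : 2 ≤ p) (hpq : p ≤ q) (hpq4 : 3 ≤ p ∨ 4 ≤ q)
    (hn : p + q + 2 ≤ n) :
    IsGreatest {m : ℕ | ∃ G : SimpleGraph (Fin n), IsOuterplanar G ∧
      ¬ ContainsDoubleStar G p q ∧ Nat.card G.edgeSet = m} (2 * n - 3) :=
  stmt13_general p q n hpq hpq4 hn
end

section
/- Let G be a connected outerplanar graph on at least 6 vertices containing no subgraph isomorphic to S_{2,2}, and suppose G contains a subgraph H isomorphic to M_4 (the 4-cycle u_1u_2u_3u_4 with one chord u_3u_4 added — equivalently K_4 minus an edge). Then every vertex of H has at most one neighbor outside H. -/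
open SimpleGraph Finset

/-- `M_4`: the unique maximal outerplanar graph on 4 vertices, isomorphic to
`K_4` minus one edge: the 4-cycle `0 1 2 3` together with the chord `0-2`. -/
def M4 : SimpleGraph (Fin 4) :=
  SimpleGraph.fromEdgeSet {s(0, 1), s(1, 2), s(2, 3), s(3, 0), s(0, 2)}


lemma ds_aux {V : Type*} [DecidableEq V] (G : SimpleGraph V) (x y va vb w1 w2 : V)
    (hxy : G.Adj x y) (h1 : G.Adj x w1) (h2 : G.Adj x w2)
    (ha : G.Adj y va) (hb : G.Adj y vb)
    (hw : w1 ≠ w2) (hab : va ≠ vb)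
    (hw1a : w1 ≠ va) (hw1b : w1 ≠ vb) (hw2a : w2 ≠ va) (hw2b : w2 ≠ vb)
    (hyw1 : w1 ≠ y) (hyw2 : w2 ≠ y) (hxa : x ≠ va) (hxb : x ≠ vb) :
    ContainsDoubleStar G 2 2 := by
  refine ⟨x, y, {w1, w2}, {va, vb}, hxy, ?_, ?_, ?_, ?_, ?_, ?_, ?_⟩
  · simp [hw]
  · simp [hab]
  · simp [Finset.disjoint_left, hw1a, hw1b, hw2a, hw2b]
  · simp [hyw1.symm, hyw2.symm]
  · simp [hxa, hxb]
  · intro v hv; rcases Finset.mem_insert.mp hv with h | h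
    · exact h ▸ h1
    · exact (Finset.mem_singleton.mp h) ▸ h2
  · intro v hv; rcases Finset.mem_insert.mp hv with h | h
    · exact h ▸ ha
    · exact (Finset.mem_singleton.mp h) ▸ hb

theorem stmt16 {V : Type*} [Fintype V] [DecidableEq V] (G : SimpleGraph V) [DecidableRel G.Adj]
    (hn : 6 ≤ Nat.card V) (hconn : G.Connected) (hop : IsOuterplanar G)
    (hfree : ¬ ContainsDoubleStar G 2 2)
    (f : Fin 4 → V) (hinjf : Function.Injective f)
    (hhom : ∀ a b : Fin 4, M4.Adj a b → G.Adj (f a) (f b)) :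
    ∀ i : Fin 4,
      (Finset.univ.filter fun w : V => G.Adj (f i) w ∧ ∀ j : Fin 4, w ≠ f j).card ≤ 1 := by
  intro i
  by_contra h
  push_neg at h
  obtain ⟨w1, hw1, w2, hw2, hne⟩ := Finset.one_lt_card.mp h
  simp only [Finset.mem_filter, Finset.mem_univ, true_and] at hw1 hw2
  obtain ⟨ha1, hb1⟩ := hw1
  obtain ⟨ha2, hb2⟩ := hw2
  have hinj : ∀ a b : Fin 4, a ≠ b → f a ≠ f b := fun a b hab h => hab (hinjf h)
  fin_cases i
  · exact hfree (ds_aux G (f 0) (f 2) (f 1) (f 3) w1 w2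
      (hhom 0 2 (by simp [M4])) ha1 ha2 (hhom 2 1 (by simp [M4])) (hhom 2 3 (by simp [M4]))
      hne (hinj 1 3 (by decide)) (hb1 1) (hb1 3) (hb2 1) (hb2 3) (hb1 2) (hb2 2)
      (hinj 0 1 (by decide)) (hinj 0 3 (by decide)))
  · exact hfree (ds_aux G (f 1) (f 0) (f 2) (f 3) w1 w2
      (hhom 1 0 (by simp [M4])) ha1 ha2 (hhom 0 2 (by simp [M4])) (hhom 0 3 (by simp [M4]))
      hne (hinj 2 3 (by decide)) (hb1 2) (hb1 3) (hb2 2) (hb2 3) (hb1 0) (hb2 0)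
      (hinj 1 2 (by decide)) (hinj 1 3 (by decide)))
  · exact hfree (ds_aux G (f 2) (f 0) (f 1) (f 3) w1 w2
      (hhom 2 0 (by simp [M4])) ha1 ha2 (hhom 0 1 (by simp [M4])) (hhom 0 3 (by simp [M4]))
      hne (hinj 1 3 (by decide)) (hb1 1) (hb1 3) (hb2 1) (hb2 3) (hb1 0) (hb2 0)
      (hinj 2 1 (by decide)) (hinj 2 3 (by decide)))
  · exact hfree (ds_aux G (f 3) (f 0) (f 1) (f 2) w1 w2
      (hhom 3 0 (by simp [M4])) ha1 ha2 (hhom 0 1 (by simp [M4])) (hhom 0 2 (by simp [M4]))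
      hne (hinj 1 2 (by decide)) (hb1 1) (hb1 2) (hb2 1) (hb2 2) (hb1 0) (hb2 0)
      (hinj 3 1 (by decide)) (hinj 3 2 (by decide)))
end
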